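/- arXiv:2012.05828 — 16 statements merged into one kernel-verified Lean document; each statement's English description precedes it below -/
import Mathlib

section
/- For every integer n ≥ 7, the least common multiple of 1, 2, ..., n is at least 2^n. -/
/-!
The integer `k * C(n, k)` divides `lcm(1, …, n)` whenever `0 < k ≤ n`: by Kummer's theorem
`v_p C(n, k)` counts the carries in the base-`p` addition `k + (n - k)`, which can occur
neither in the `v_p k` lowest digits of `k` (they vanish) nor beyond the top digit of `n`, so
`v_p (k * C(n, k)) ≤ log_p n = v_p lcm(1, …, n)`. Taking `k = ⌈n / 2⌉` and the bound
`4 ^ m < m * C(2m, m)` for `m ≥ 4` gives `2 ^ n ≤ ⌈n / 2⌉ * C(n, ⌈n / 2⌉)` for `n ≥ 7`.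
-/

open Finset

namespace Nat

variable {p n k : ℕ}

theorem factorization_choose_add_factorization_le_log (hp : p.Prime) (hk0 : k ≠ 0)
    (hkn : k ≤ n) : (choose n k).factorization p + k.factorization p ≤ log p n := by
  have hdisj : Disjoint {i ∈ Ico 1 (log p n + 1) | p ^ i ≤ k % p ^ i + (n - k) % p ^ i}
      {i ∈ Ico 1 (log p n + 1) | p ^ i ∣ k} := by
    simp +contextual [Finset.disjoint_right, dvd_iff_mod_eq_zero, Nat.mod_lt _ (pow_pos hp.pos _)]
  have hk_lt : k < p ^ (log p n + 1) := hkn.trans_lt (lt_pow_succ_log_self hp.one_lt n)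
  rw [factorization_choose hp hkn (lt_add_one _),
    factorization_eq_card_pow_dvd_of_lt hp (pos_of_ne_zero hk0) hk_lt,
    ← card_union_of_disjoint hdisj, filter_union_right]
  exact (card_filter_le _ _).trans_eq (card_Ico _ _)

theorem mul_choose_dvd_lcmUpto (hk0 : k ≠ 0) (hkn : k ≤ n) : k * choose n k ∣ lcmUpto n := by
  have hchoose := choose_ne_zero hkn
  rw [← factorization_prime_le_iff_dvd (mul_ne_zero hk0 hchoose) (lcmUpto_ne_zero n)]
  intro p hp
  rw [factorization_mul hk0 hchoose, factorization_lcmUpto n hp, Finsupp.add_apply, add_comm]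
  exact factorization_choose_add_factorization_le_log hp hk0 hkn

theorem two_pow_le_mul_choose_half (hn : 7 ≤ n) :
    2 ^ n ≤ (n + 1) / 2 * choose n ((n + 1) / 2) := by
  obtain ⟨m, rfl | rfl⟩ := even_or_odd' n
  · have hm : (2 * m + 1) / 2 = m := by omega
    rw [hm, pow_mul]
    exact (four_pow_lt_mul_centralBinom m (by omega)).le
  · have hm : (2 * m + 1 + 1) / 2 = m + 1 := by omega
    rw [hm]
    obtain rfl | hm4 : m = 3 ∨ 4 ≤ m := by omega
    · decide
    have hsucc : (m + 1) * choose (2 * m + 1) (m + 1) = (2 * m + 1) * centralBinom m := by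
      rw [centralBinom, add_one_mul_choose_eq, mul_comm]
    calc 2 ^ (2 * m + 1) = 2 * 4 ^ m := by rw [pow_succ, pow_mul]; ring
      _ ≤ 2 * (m * centralBinom m) := by
        gcongr; exact (four_pow_lt_mul_centralBinom m hm4).le
      _ ≤ (m + 1) * choose (2 * m + 1) (m + 1) := by rw [hsucc, ← mul_assoc]; gcongr; omega

end Nat

theorem stmt_0 (n : ℕ) (hn : 7 ≤ n) :
    2 ^ n ≤ Finset.lcm (Finset.Icc 1 n) id :=
  (Nat.two_pow_le_mul_choose_half hn).trans <|
    Nat.le_of_dvd (Nat.lcmUpto_pos n) (Nat.mul_choose_dvd_lcmUpto (by omega) (by omega))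
end

section
/- For every integer n ≥ 1, the least common multiple of 1, 2, ..., n is at most 4^n. -/
/-!
For `a ≤ b`, a prime power `p ^ e ≤ a + b` is either at most `b`, or it exceeds both `a` and `b`;
then adding `a` and `b` in base `p` carries into digit `e`, so `p ∣ (a + b).choose a` by Kummer's
theorem, while `p ^ (e - 1) ≤ (a + b) / 2 ≤ b`. Hence `lcm(1, …, a + b)` divides
`lcm(1, …, b) * (a + b).choose a`. Splitting `n = ⌊n/2⌋ + ⌈n/2⌉` and using
`n.choose ⌊n/2⌋ ≤ 4 ^ ⌊n/2⌋`, induction gives `lcm(1, …, n) ≤ 4 ^ ⌈n/2⌉ * 4 ^ ⌊n/2⌋ = 4 ^ n`.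
-/

open Finset

namespace Nat

theorem dvd_lcmUpto {k m : ℕ} (hk : k ≠ 0) (hkm : k ≤ m) : k ∣ lcmUpto m :=
  dvd_lcm (mem_Icc.2 ⟨one_le_iff_ne_zero.2 hk, hkm⟩)

theorem lcmUpto_dvd_of_forall_prime_pow_dvd {m N : ℕ}
    (h : ∀ p e, p.Prime → p ^ e ≤ m → p ^ e ∣ N) : lcmUpto m ∣ N :=
  Finset.lcm_dvd fun k hk => (dvd_iff_prime_pow_dvd_dvd N k).2 fun p e hp hpe =>
    h p e hp ((le_of_dvd (mem_Icc.1 hk).1 hpe).trans (mem_Icc.1 hk).2)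

theorem Prime.dvd_choose_add_of_lt_pow {p e a b : ℕ} (hp : p.Prime) (ha : a < p ^ e)
    (hb : b < p ^ e) (hab : p ^ e ≤ a + b) : p ∣ (a + b).choose a := by
  have he : e ≠ 0 := by rintro rfl; rw [pow_zero] at ha hb hab; omega
  have hcarry : e ∈ {i ∈ Ico 1 (e + 1) | p ^ i ≤ a % p ^ i + b % p ^ i} := by
    rw [mem_filter, mem_Ico, mod_eq_of_lt ha, mod_eq_of_lt hb]
    exact ⟨⟨one_le_iff_ne_zero.2 he, lt_add_one e⟩, hab⟩
  have hlog : log p (b + a) < e + 1 := by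
    refine log_lt_of_lt_pow' (succ_ne_zero e) ?_
    calc b + a < p ^ e * 2 := by omega
      _ ≤ p ^ (e + 1) := by rw [pow_succ]; gcongr; exact hp.two_le
  rw [hp.dvd_iff_one_le_factorization (choose_ne_zero (le_add_right a b)), add_comm a b,
    factorization_choose' hp hlog]
  exact Finset.card_pos.2 ⟨e, hcarry⟩

theorem lcmUpto_add_dvd_lcmUpto_mul_choose {a b : ℕ} (hab : a ≤ b) :
    lcmUpto (a + b) ∣ lcmUpto b * (a + b).choose a := by
  refine lcmUpto_dvd_of_forall_prime_pow_dvd fun p e hp hpe => ?_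
  have hpe0 : p ^ e ≠ 0 := pow_ne_zero e hp.ne_zero
  rcases le_or_gt (p ^ e) b with hle | hgt
  · exact (dvd_lcmUpto hpe0 hle).mul_right _
  obtain ⟨d, rfl⟩ : ∃ d, e = d + 1 := exists_eq_succ_of_ne_zero (by rintro rfl; rw [pow_zero] at hpe hgt; omega)
  have hpd : p ^ d ≤ b := by
    have : 2 * p ^ d ≤ p ^ (d + 1) := by rw [pow_succ']; gcongr; exact hp.two_le
    omega
  rw [pow_succ]
  exact mul_dvd_mul (dvd_lcmUpto (pow_ne_zero d hp.ne_zero) hpd)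
    (hp.dvd_choose_add_of_lt_pow (by omega) hgt hpe)

theorem choose_div_two_le_four_pow (n : ℕ) : n.choose (n / 2) ≤ 4 ^ (n / 2) := by
  obtain ⟨k, rfl | rfl⟩ := even_or_odd' n
  · simpa [← centralBinom_eq_two_mul_choose] using centralBinom_le_four_pow k
  · simpa [Nat.mul_add_div] using choose_middle_le_pow k

theorem lcmUpto_le_four_pow (n : ℕ) : lcmUpto n ≤ 4 ^ n := by
  induction n using Nat.strong_induction_on with
  | _ n ih =>
    rcases lt_or_ge n 2 with hn | hn
    · interval_cases n <;> simp [lcmUpto]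
    have hsplit : n / 2 + (n - n / 2) = n := by omega
    calc lcmUpto n
        ≤ lcmUpto (n - n / 2) * n.choose (n / 2) := by
          refine le_of_dvd (mul_pos (lcmUpto_pos _) (choose_pos (div_le_self n 2))) ?_
          simpa only [hsplit] using lcmUpto_add_dvd_lcmUpto_mul_choose (a := n / 2) (b := n - n / 2) (by omega)
      _ ≤ 4 ^ (n - n / 2) * 4 ^ (n / 2) :=
          Nat.mul_le_mul (ih (n - n / 2) (by omega)) (choose_div_two_le_four_pow n)
      _ = 4 ^ n := by rw [← pow_add, Nat.sub_add_cancel (div_le_self n 2)]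

end Nat

theorem stmt_1_general (n : ℕ) :
    Finset.lcm (Finset.Icc 1 n) id ≤ 4 ^ n := Nat.lcmUpto_le_four_pow n

theorem stmt_1 (n : ℕ) (hn : 1 ≤ n) :
    Finset.lcm (Finset.Icc 1 n) id ≤ 4 ^ n :=
  stmt_1_general n
end

section
/- For all positive integers m and n with m ≤ n, the product m * C(n, m) divides lcm(1, 2, ..., n), where C(n, m) is the binomial coefficient. -/
/-!
By Kummer's theorem, `v_p (C(n, k))` counts the carries when adding `k` and `n - k` in base `p`,
which happen at positions `i ≤ log_p n`. A carry at position `i` is impossible when `p ^ i ∣ k`,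
so `v_p (C(n, k)) + v_p k ≤ log_p n`, i.e. every prime power dividing `k * C(n, k)` is at most `n`
and hence divides `lcm (1, …, n)`.
-/

open Finset

theorem Nat.Prime.emultiplicity_choose_add_emultiplicity_le_log {p n k : ℕ} (hp : p.Prime)
    (hk : k ≠ 0) (hkn : k ≤ n) :
    emultiplicity p (n.choose k) + emultiplicity p k ≤ (Nat.log p n : ℕ∞) := by
  set L := Nat.log p n
  have hdisj :
      Disjoint {i ∈ Ico 1 (L + 1) | p ^ i ≤ k % p ^ i + (n - k) % p ^ i}
        {i ∈ Ico 1 (L + 1) | p ^ i ∣ k} := by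
    simp +contextual [Finset.disjoint_right, Nat.dvd_iff_mod_eq_zero,
      Nat.mod_lt _ (pow_pos hp.pos _)]
  rw [hp.emultiplicity_choose hkn (Nat.lt_succ_self _),
    Nat.emultiplicity_eq_card_pow_dvd hp.ne_one hk.bot_lt
      (Nat.lt_succ_of_le (Nat.log_mono_right hkn)), ← Nat.cast_add, Nat.cast_le,
    ← card_union_of_disjoint hdisj, filter_union_right]
  have h := (Ico 1 (L + 1)).card_filter_le
    fun i => p ^ i ≤ k % p ^ i + (n - k) % p ^ i ∨ p ^ i ∣ k
  rwa [Nat.card_Ico, Nat.add_sub_cancel] at h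

theorem Nat.Prime.pow_le_of_pow_dvd_mul_choose {p n k a : ℕ} (hp : p.Prime) (hk : k ≠ 0)
    (hkn : k ≤ n) (h : p ^ a ∣ k * n.choose k) : p ^ a ≤ n := by
  have ha : (a : ℕ∞) ≤ Nat.log p n :=
    calc (a : ℕ∞) ≤ emultiplicity p (k * n.choose k) := le_emultiplicity_of_pow_dvd h
      _ = emultiplicity p (n.choose k) + emultiplicity p k := by
        rw [hp.emultiplicity_mul, add_comm]
      _ ≤ Nat.log p n := hp.emultiplicity_choose_add_emultiplicity_le_log hk hkn
  calc p ^ a ≤ p ^ Nat.log p n := Nat.pow_le_pow_right hp.pos (by exact_mod_cast ha)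
    _ ≤ n := Nat.pow_log_le_self p (by omega)

theorem stmt_2 (m n : ℕ) (hm : 0 < m) (hmn : m ≤ n) :
    m * Nat.choose n m ∣ Finset.lcm (Finset.Icc 1 n) id := by
  rw [Nat.dvd_iff_prime_pow_dvd_dvd]
  intro p a hp h
  exact dvd_lcm (mem_Icc.2
    ⟨Nat.one_le_pow a p hp.pos, hp.pow_le_of_pow_dvd_mul_choose hm.ne' hmn h⟩)
end

section
/- For every natural number n, lcm(C(n,0), C(n,1), ..., C(n,n)) = lcm(1, 2, ..., n+1) / (n+1). -/
/-!
Write `D(n, k) = (n + 1) * C(n, k)`. The reciprocals `1 / D(n, k)` form Leibniz's harmonic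
triangle: `1 / D(n, k) = 1 / D(n + 1, k) + 1 / D(n + 1, k + 1)` and `1 / D(n, 0) = 1 / (n + 1)`.
Reading this rule as `1 / D(n + 1, k + 1) = 1 / D(n, k) - 1 / D(n + 1, k)`, an induction shows
that every `D(n, k)` divides `lcm(1, …, n + 1)`. Conversely `j + 1` divides
`D(n, j) = (j + 1) * C(n + 1, j + 1)`, so `lcm(1, …, n + 1) = (n + 1) * lcm_k C(n, k)`.
-/

open Finset

/-- `leibnizDenom j k = D(j + k, k)`: indexing by the distances to the two edges of the triangle
turns Leibniz's rule into an induction on `j`. -/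
def leibnizDenom (j k : ℕ) : ℕ := (j + k + 1) * (j + k).choose k

lemma succ_mul_leibnizDenom_succ_left (j k : ℕ) :
    (j + 1) * leibnizDenom (j + 1) k = (j + k + 2) * leibnizDenom j k := by
  have h := Nat.choose_mul_succ_eq (j + k) k
  rw [show j + k + 1 - k = j + 1 by omega] at h
  simp only [leibnizDenom, show j + 1 + k = j + k + 1 by omega]
  zify at h ⊢
  linear_combination -((j : ℤ) + k + 2) * h

lemma succ_mul_leibnizDenom_succ_right (j k : ℕ) :
    (k + 1) * leibnizDenom j (k + 1) = (j + k + 2) * leibnizDenom j k := by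
  have h := Nat.add_one_mul_choose_eq (j + k) k
  simp only [leibnizDenom, show j + (k + 1) = j + k + 1 by omega]
  zify at h ⊢
  linear_combination -((j : ℤ) + k + 2) * h

/-- Leibniz's rule
`1 / leibnizDenom j k = 1 / leibnizDenom (j + 1) k + 1 / leibnizDenom j (k + 1)`,
cleared of denominators. -/
lemma leibnizDenom_rule (j k : ℕ) :
    leibnizDenom (j + 1) k * leibnizDenom j (k + 1)
      = leibnizDenom (j + 1) k * leibnizDenom j k
        + leibnizDenom j k * leibnizDenom j (k + 1) := by
  have hl := succ_mul_leibnizDenom_succ_left j k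
  have hr := succ_mul_leibnizDenom_succ_right j k
  set a := leibnizDenom (j + 1) k
  set b := leibnizDenom j k
  set c := leibnizDenom j (k + 1)
  apply Nat.eq_of_mul_eq_mul_left (by positivity : 0 < (j + 1) * (k + 1))
  zify at hl hr ⊢
  linear_combination ((k + 1) * (c - b) : ℤ) * hl + (((k : ℤ) + 1) * b) * hr

/-- If `1 / b = 1 / a + 1 / c`, then `M / a = M / b - M / c`. -/
lemma dvd_of_mul_eq_mul_add_mul {a b c M : ℕ} (hb : b ∣ M) (hc : c ∣ M)
    (h : a * c = a * b + b * c) : a ∣ M := by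
  obtain ⟨x, rfl⟩ := hb
  obtain ⟨y, hy⟩ := hc
  rcases Nat.eq_zero_or_pos (b * c) with hbc | hbc
  · rcases Nat.mul_eq_zero.mp hbc with rfl | rfl
    · simp
    · simp [hy]
  have hxy : a * x = b * x + a * y := by
    apply Nat.eq_of_mul_eq_mul_left hbc
    zify at h hy ⊢
    linear_combination (b * x : ℤ) * h + (a * b : ℤ) * hy
  have hM : b * x = a * x - a * y := by omega
  exact hM ▸ Nat.dvd_sub (dvd_mul_right a x) (dvd_mul_right a y)

lemma leibnizDenom_dvd_lcm (j k : ℕ) : leibnizDenom j k ∣ (Icc 1 (j + k + 1)).lcm id := by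
  induction j generalizing k with
  | zero =>
    simpa [leibnizDenom] using dvd_lcm (f := id) (mem_Icc.mpr ⟨by omega, le_rfl⟩)
  | succ j ih =>
    rw [show j + 1 + k + 1 = j + (k + 1) + 1 by omega]
    refine dvd_of_mul_eq_mul_add_mul ((ih k).trans (lcm_mono ?_)) (ih (k + 1))
      (leibnizDenom_rule j k)
    exact Icc_subset_Icc le_rfl (by omega)

lemma succ_mul_choose_dvd_lcm {n k : ℕ} (hk : k ≤ n) :
    (n + 1) * n.choose k ∣ (Icc 1 (n + 1)).lcm id := by
  obtain ⟨j, rfl⟩ := Nat.exists_eq_add_of_le' hk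
  exact leibnizDenom_dvd_lcm j k

lemma succ_dvd_succ_mul_choose (n j : ℕ) : j + 1 ∣ (n + 1) * n.choose j :=
  Dvd.intro_left _ (Nat.add_one_mul_choose_eq n j).symm

theorem stmt_4 (n : ℕ) :
    Finset.lcm (Finset.range (n + 1)) (fun k => Nat.choose n k)
      = Finset.lcm (Finset.Icc 1 (n + 1)) id / (n + 1) := by
  have hsucc : n + 1 ∣ (Icc 1 (n + 1)).lcm id := dvd_lcm (f := id) (by simp)
  apply Nat.dvd_antisymm
  · refine Finset.lcm_dvd fun k hk => Nat.dvd_div_of_mul_dvd ?_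
    exact succ_mul_choose_dvd_lcm (mem_range_succ_iff.mp hk)
  · rw [Nat.div_dvd_iff_dvd_mul hsucc n.succ_pos]
    refine Finset.lcm_dvd fun j hj => ?_
    obtain ⟨hj1, hjn⟩ := mem_Icc.mp hj
    obtain ⟨i, rfl⟩ : ∃ i, j = i + 1 := Nat.exists_eq_add_one.mpr hj1
    have hi : i ∈ range (n + 1) := mem_range.mpr (by omega)
    exact (succ_dvd_succ_mul_choose n i).trans (mul_dvd_mul_left _ (dvd_lcm hi))
end

section
/- Let n ≥ 0 and let p be a prime. Write n in base p as n = c_N p^N + ... + c_1 p + c_0 with c_N ≠ 0. If n = p^(N+1) - 1 then max over 0 ≤ k ≤ n of the p-adic valuation of C(n,k) equals 0; otherwise it equals N - min{i : c_i ≠ p-1}, and this maximum is attained at k = p^N - 1. -/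
/-!
By Kummer's theorem, `ϑ_p C(n, k)` is the number of carries when `k` and `n - k` are added in
base `p`. There is no carry at a level `i` with `p ^ i ∣ n + 1` (the `i` lowest digits of `n` are
then all `p - 1`), nor beyond level `N`, so `ϑ_p C(n, k) ≤ N - ϑ_p (n + 1)`; for `k = p ^ N - 1`
every remaining level `1 ≤ i ≤ N` carries. Finally `ϑ_p (n + 1)` is the number of trailing digits
`p - 1` of `n`, i.e. `min {i | c i ≠ p - 1}`, unless all digits are `p - 1`.
-/

open Finset

theorem dvd_add_one_iff_mod_add_one_eq {m : ℕ} (hm : 0 < m) (n : ℕ) :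
    m ∣ n + 1 ↔ n % m + 1 = m := by
  obtain rfl | hm1 := (Nat.one_le_iff_ne_zero.2 hm.ne').eq_or_lt
  · simp [Nat.mod_one]
  have := Nat.mod_lt n hm
  rw [Nat.dvd_iff_mod_eq_zero, Nat.add_mod_eq_ite, Nat.mod_eq_of_lt hm1]
  split_ifs
  · omega
  · simp only [false_iff]; omega

theorem mod_add_mod_sub_lt_of_dvd_add_one {m n k : ℕ} (hk : k ≤ n) (h : m ∣ n + 1) :
    k % m + (n - k) % m < m := by
  have hm : 0 < m := Nat.pos_of_dvd_of_pos h n.add_one_pos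
  have hnm := (dvd_add_one_iff_mod_add_one_eq hm n).1 h
  have hsum := Nat.add_mod_eq_ite (k := m) (m := k) (n := n - k)
  rw [Nat.add_sub_cancel' hk] at hsum
  have := Nat.mod_lt k hm
  have := Nat.mod_lt (n - k) hm
  split_ifs at hsum <;> omega

section Digits

variable {b : ℕ} {c : ℕ → ℕ}

theorem sum_pred_mul_pow_add_one (hb : 0 < b) (i : ℕ) :
    ∑ j ∈ range i, (b - 1) * b ^ j + 1 = b ^ i := by
  have h := geom_sum_mul_add (b - 1) i
  rwa [Nat.sub_one_add_one hb.ne', sum_mul, ← sum_congr rfl fun j _ => mul_comm _ _] at h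

theorem sum_digits_mul_pow_lt (hc : ∀ j, c j < b) (i : ℕ) :
    ∑ j ∈ range i, c j * b ^ j < b ^ i := by
  have hb : 0 < b := (Nat.zero_le _).trans_lt (hc 0)
  calc ∑ j ∈ range i, c j * b ^ j ≤ ∑ j ∈ range i, (b - 1) * b ^ j :=
        sum_le_sum fun j _ => Nat.mul_le_mul_right _ (Nat.le_sub_one_of_lt (hc j))
    _ < b ^ i := by have := sum_pred_mul_pow_add_one hb i; omega

theorem sum_digits_mul_pow_add_one_eq_iff (hc : ∀ j, c j < b) (i : ℕ) :
    ∑ j ∈ range i, c j * b ^ j + 1 = b ^ i ↔ ∀ j < i, c j = b - 1 := by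
  have hb : 0 < b := (Nat.zero_le _).trans_lt (hc 0)
  refine ⟨fun h => ?_, fun h => ?_⟩
  · by_contra! ⟨j, hj, hcj⟩
    have : ∑ j ∈ range i, c j * b ^ j < ∑ j ∈ range i, (b - 1) * b ^ j :=
      sum_lt_sum (fun j _ => Nat.mul_le_mul_right _ (Nat.le_sub_one_of_lt (hc j)))
        ⟨j, mem_range.2 hj, Nat.mul_lt_mul_of_pos_right
          (lt_of_le_of_ne (Nat.le_sub_one_of_lt (hc j)) hcj) (Nat.pow_pos hb)⟩
    have := sum_pred_mul_pow_add_one hb i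
    omega
  · rw [← sum_pred_mul_pow_add_one hb i]
    exact congrArg (· + 1) (sum_congr rfl fun j hj => by rw [h j (mem_range.1 hj)])

variable {n N : ℕ}

theorem mod_pow_eq_sum_digits (hc : ∀ j, c j < b)
    (hn : n = ∑ j ∈ range (N + 1), c j * b ^ j) {i : ℕ} (hi : i ≤ N + 1) :
    n % b ^ i = ∑ j ∈ range i, c j * b ^ j := by
  have hdvd : b ^ i ∣ ∑ j ∈ Ico i (N + 1), c j * b ^ j :=
    dvd_sum fun j hj => Dvd.dvd.mul_left (pow_dvd_pow b (mem_Ico.1 hj).1) _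
  obtain ⟨t, ht⟩ := hdvd
  rw [hn, ← sum_range_add_sum_Ico _ hi, ht, Nat.add_mul_mod_self_left,
    Nat.mod_eq_of_lt (sum_digits_mul_pow_lt hc i)]

theorem pow_dvd_add_one_iff_digits (hc : ∀ j, c j < b)
    (hn : n = ∑ j ∈ range (N + 1), c j * b ^ j) {i : ℕ} (hi : i ≤ N + 1) :
    b ^ i ∣ n + 1 ↔ ∀ j < i, c j = b - 1 := by
  have hb : 0 < b := (Nat.zero_le _).trans_lt (hc 0)
  rw [dvd_add_one_iff_mod_add_one_eq (Nat.pow_pos hb), mod_pow_eq_sum_digits hc hn hi,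
    sum_digits_mul_pow_add_one_eq_iff hc]

theorem pow_le_of_top_digit_ne_zero
    (hn : n = ∑ j ∈ range (N + 1), c j * b ^ j) (hcN : c N ≠ 0) : b ^ N ≤ n :=
  calc b ^ N ≤ c N * b ^ N := Nat.le_mul_of_pos_left _ (Nat.pos_of_ne_zero hcN)
    _ ≤ n := hn ▸ single_le_sum (f := fun j => c j * b ^ j) (fun _ _ => Nat.zero_le _)
        (self_mem_range_succ N)

end Digits

section Carries

variable {p n k N : ℕ}

def carries (p n k N : ℕ) : Finset ℕ :=
  {i ∈ Ico 1 (N + 1) | p ^ i ≤ k % p ^ i + (n - k) % p ^ i}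

theorem padicValNat_choose_eq_card_carries [Fact p.Prime] (hk : k ≤ n) (hn : n < p ^ (N + 1)) :
    padicValNat p (n.choose k) = #(carries p n k N) :=
  padicValNat_choose hk (Nat.log_lt_of_lt_pow' N.succ_ne_zero hn)

theorem carries_subset_Ico (hp : p ≠ 1) (hk : k ≤ n) :
    carries p n k N ⊆ Ico (padicValNat p (n + 1) + 1) (N + 1) := by
  intro i hi
  simp only [carries, mem_filter, mem_Ico] at hi ⊢
  refine ⟨not_lt.1 fun hiv => ?_, hi.1.2⟩
  have hdvd : p ^ i ∣ n + 1 :=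
    (padicValNat_dvd_iff_le_of_ne_one hp n.add_one_ne_zero).2 (Nat.le_of_lt_succ hiv)
  exact (mod_add_mod_sub_lt_of_dvd_add_one hk hdvd).not_ge hi.2

theorem carries_pow_sub_one (hp : 1 < p) (hN : p ^ N ≤ n + 1) :
    carries p n (p ^ N - 1) N = Ico (padicValNat p (n + 1) + 1) (N + 1) := by
  ext i
  simp only [carries, mem_filter, mem_Ico]
  by_cases hi : 1 ≤ i ∧ i < N + 1
  · have hpi : 0 < p ^ i := Nat.pow_pos (by omega)
    have hpN : 0 < p ^ N := Nat.pow_pos (by omega)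
    have hiN : p ^ i ∣ p ^ N := pow_dvd_pow p (by omega)
    have hk : (p ^ N - 1) % p ^ i + 1 = p ^ i :=
      (dvd_add_one_iff_mod_add_one_eq hpi _).1 (by rwa [Nat.sub_add_cancel hpN])
    have hnk : (n - (p ^ N - 1)) % p ^ i = (n + 1) % p ^ i := by
      obtain ⟨t, ht⟩ := hiN
      rw [show n - (p ^ N - 1) = n + 1 - p ^ N by omega, ht, Nat.sub_mul_mod (ht ▸ hN)]
    have hdvd := padicValNat_dvd_iff_le_of_ne_one hp.ne' n.add_one_ne_zero (n := i)
    rw [Nat.dvd_iff_mod_eq_zero] at hdvd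
    simp only [hi, true_and, and_true, hnk]
    generalize p ^ i = q at *
    omega
  · exact iff_of_false (fun h => hi h.1) (by omega)

theorem padicValNat_choose_le [Fact p.Prime] (hk : k ≤ n) (hn : n < p ^ (N + 1)) :
    padicValNat p (n.choose k) ≤ N - padicValNat p (n + 1) := by
  rw [padicValNat_choose_eq_card_carries hk hn]
  have := card_le_card (carries_subset_Ico (Fact.out : p.Prime).ne_one hk (N := N))
  rw [Nat.card_Ico] at this
  omega

theorem padicValNat_choose_pow_sub_one [Fact p.Prime] (hN : p ^ N ≤ n + 1) (hn : n < p ^ (N + 1)) :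
    padicValNat p (n.choose (p ^ N - 1)) = N - padicValNat p (n + 1) := by
  rw [padicValNat_choose_eq_card_carries (by omega) hn,
    carries_pow_sub_one (Fact.out : p.Prime).one_lt hN, Nat.card_Ico]
  omega

end Carries

theorem padicValNat_add_one_eq_sInf {p n N : ℕ} [Fact p.Prime] {c : ℕ → ℕ} (hc : ∀ j, c j < p)
    (hn : n = ∑ j ∈ range (N + 1), c j * p ^ j) (hne : n ≠ p ^ (N + 1) - 1) :
    padicValNat p (n + 1) = sInf {i | c i ≠ p - 1} := by
  set v := padicValNat p (n + 1)
  have hvN : v ≤ N := by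
    by_contra! hv
    have := Nat.le_of_dvd n.add_one_pos
      ((padicValNat_dvd_iff_le n.add_one_ne_zero).2 hv : p ^ (N + 1) ∣ n + 1)
    have := hn ▸ sum_digits_mul_pow_lt hc (N + 1)
    omega
  have hlow : ∀ j < v, c j = p - 1 :=
    (pow_dvd_add_one_iff_digits hc hn (by omega)).1 pow_padicValNat_dvd
  have hv : c v ≠ p - 1 := fun h =>
    pow_succ_padicValNat_not_dvd n.add_one_ne_zero <|
      (pow_dvd_add_one_iff_digits hc hn (by omega)).2 fun j hj =>
        (Nat.lt_succ_iff_lt_or_eq.1 hj).elim (hlow j) (· ▸ h)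
  refine ((Nat.sInf_le hv).antisymm (le_csInf ⟨v, hv⟩ fun j (hj : c j ≠ p - 1) => ?_)).symm
  exact not_lt.1 fun hjv => hj (hlow j hjv)

theorem stmt_5 (p : ℕ) (hp : p.Prime) (n N : ℕ) (c : ℕ → ℕ)
    (hdig : ∀ i, c i < p)
    (hrep : n = ∑ i ∈ Finset.range (N + 1), c i * p ^ i)
    (hcN : c N ≠ 0) :
    padicValNat p (Nat.choose n (p ^ N - 1))
        = (if n = p ^ (N + 1) - 1 then 0 else N - sInf {i | c i ≠ p - 1}) ∧
    ∀ k ≤ n, padicValNat p (Nat.choose n k)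
        ≤ padicValNat p (Nat.choose n (p ^ N - 1)) := by
  have := Fact.mk hp
  have hlt : n < p ^ (N + 1) := hrep ▸ sum_digits_mul_pow_lt hdig (N + 1)
  have hval : padicValNat p (n.choose (p ^ N - 1)) = N - padicValNat p (n + 1) :=
    padicValNat_choose_pow_sub_one (Nat.le_succ_of_le (pow_le_of_top_digit_ne_zero hrep hcN)) hlt
  refine ⟨?_, fun k hk => hval ▸ padicValNat_choose_le hk hlt⟩
  rw [hval]
  split_ifs with htop
  · have : p ^ (N + 1) ∣ n + 1 := by rw [htop, Nat.sub_add_cancel (Nat.pow_pos hp.pos)]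
    have := (padicValNat_dvd_iff_le n.add_one_ne_zero).1 this
    omega
  · rw [padicValNat_add_one_eq_sInf hdig hrep htop]
end

section
/- Let (u_k) be an arithmetic progression of integers with common difference r ≥ 1 and first term u_0 ≥ 1 with gcd(u_0, r) = 1. Then for every natural number n, lcm(u_0, u_1, ..., u_n) is a multiple of (u_0 u_1 ⋯ u_n) / n!. -/
/-!
Compare `p`-adic valuations. Counting multiples of `p ^ i`, the valuation of `u₀ ⋯ uₙ` is
`∑_{i ≥ 1} #{k ≤ n | p ^ i ∣ u_k}`. Once `p ^ i` divides some `u_k` it is coprime to `r`, so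
the `k` with `p ^ i ∣ u_k` form one residue class modulo `p ^ i` and there are at most
`⌊n / p ^ i⌋ + 1` of them, the extra `1` occurring only when `p ^ i` divides the lcm.
Summing over `i`, Legendre's formula turns `∑ ⌊n / p ^ i⌋` into the valuation of `n!`, and
the extra ones add up to the valuation of the lcm.
-/

open Finset

namespace Nat

theorem card_filter_dvd_add_mul_le {a r m : ℕ} (hmr : m.Coprime r) (n : ℕ) :
    #{k ∈ range (n + 1) | m ∣ a + k * r} ≤ n / m + 1 := by
  have h := card_le_card_of_injOn (s := {k ∈ range (n + 1) | m ∣ a + k * r})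
    (t := range (n / m + 1)) (fun k => k / m) ?_ ?_
  · simpa using h
  · intro k hk
    simp only [coe_filter, mem_range, Set.mem_ofPred_eq, coe_range, Set.mem_Iio] at hk ⊢
    exact Nat.lt_succ_of_le (Nat.div_le_div_right (Nat.le_of_lt_succ hk.1))
  · intro k₁ hk₁ k₂ hk₂ hdiv
    simp only [coe_filter, mem_range, Set.mem_ofPred_eq] at hk₁ hk₂
    have hmod : k₁ ≡ k₂ [MOD m] :=
      (ModEq.add_left_cancel' a <| (modEq_zero_iff_dvd.2 hk₁.2).trans
        (modEq_zero_iff_dvd.2 hk₂.2).symm).cancel_right_of_coprime hmr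
    rw [← div_add_mod k₁ m, ← div_add_mod k₂ m, hmod, show k₁ / m = k₂ / m from hdiv]

theorem card_filter_dvd_add_mul_le_div_add_ite {a r : ℕ} (har : a.Coprime r) (n m : ℕ) :
    #{k ∈ range (n + 1) | m ∣ a + k * r} ≤
      n / m + if m ∣ (range (n + 1)).lcm (fun k => a + k * r) then 1 else 0 := by
  rcases eq_empty_or_nonempty {k ∈ range (n + 1) | m ∣ a + k * r} with hempty | ⟨k, hk⟩
  · simp [hempty]
  · rw [mem_filter] at hk
    rw [if_pos (hk.2.trans (Finset.dvd_lcm (f := fun k => a + k * r) hk.1))]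
    have hmr : m.Coprime r := ((coprime_add_mul_right_left a r k).2 har).coprime_dvd_left hk.2
    exact card_filter_dvd_add_mul_le hmr n

theorem factorization_prod_eq_sum_card_pow_dvd {ι : Type*} {s : Finset ι} {f : ι → ℕ}
    {p b : ℕ} (hp : p.Prime) (hf : ∀ k ∈ s, f k ≠ 0) (hb : ∀ k ∈ s, f k < p ^ b) :
    (∏ k ∈ s, f k).factorization p = ∑ i ∈ Ico 1 b, #{k ∈ s | p ^ i ∣ f k} := by
  rw [factorization_prod hf, Finset.sum_apply']
  calc ∑ k ∈ s, (f k).factorization p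
      = ∑ k ∈ s, #{i ∈ Ico 1 b | p ^ i ∣ f k} :=
        sum_congr rfl fun k hk => factorization_eq_card_pow_dvd_of_lt hp
          (pos_of_ne_zero (hf k hk)) (hb k hk)
    _ = ∑ i ∈ Ico 1 b, #{k ∈ s | p ^ i ∣ f k} := by
        simp only [card_filter]
        exact sum_comm

theorem factorization_prod_add_mul_le {a r : ℕ} (ha : 0 < a) (har : a.Coprime r) (n : ℕ)
    {p : ℕ} (hp : p.Prime) :
    (∏ k ∈ range (n + 1), (a + k * r)).factorization p ≤
      (n ! * (range (n + 1)).lcm (fun k => a + k * r)).factorization p := by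
  set L := (range (n + 1)).lcm (fun k => a + k * r)
  have hterm : ∀ k ∈ range (n + 1), a + k * r ≠ 0 := fun k _ => by positivity
  have hL : L ≠ 0 := lcm_ne_zero_iff.2 hterm
  set b := n + L
  have hb : ∀ {N}, N ≤ b → N < p ^ b := fun h => h.trans_lt (Nat.lt_pow_self hp.one_lt)
  have hLb : L < p ^ b := hb (le_add_left L n)
  calc (∏ k ∈ range (n + 1), (a + k * r)).factorization p
      = ∑ i ∈ Ico 1 b, #{k ∈ range (n + 1) | p ^ i ∣ a + k * r} :=
        factorization_prod_eq_sum_card_pow_dvd hp hterm fun k hk =>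
          (le_of_dvd (pos_of_ne_zero hL)
            (Finset.dvd_lcm (f := fun k => a + k * r) hk)).trans_lt hLb
    _ ≤ ∑ i ∈ Ico 1 b, (n / p ^ i + if p ^ i ∣ L then 1 else 0) :=
        sum_le_sum fun i _ => card_filter_dvd_add_mul_le_div_add_ite har n (p ^ i)
    _ = (n !).factorization p + L.factorization p := by
        rw [sum_add_distrib, ← card_filter, factorization_factorial hp
          (log_lt_of_lt_pow' (by omega) (hb (le_add_right n L))),
          factorization_eq_card_pow_dvd_of_lt hp (pos_of_ne_zero hL) hLb]
    _ = (n ! * L).factorization p := by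
        rw [factorization_mul (factorial_ne_zero n) hL, Finsupp.add_apply]

end Nat

theorem stmt_7_general (u₀ r : ℕ) (hu : 1 ≤ u₀) (hgcd : Nat.gcd u₀ r = 1)
    (n : ℕ) :
    (∏ k ∈ Finset.range (n + 1), (u₀ + k * r))
      ∣ Nat.factorial n * Finset.lcm (Finset.range (n + 1)) (fun k => u₀ + k * r) := by
  have hterm : ∀ k ∈ range (n + 1), u₀ + k * r ≠ 0 := fun k _ => by omega
  exact (Nat.factorization_prime_le_iff_dvd (prod_ne_zero_iff.2 hterm)
    (mul_ne_zero (Nat.factorial_ne_zero n) (lcm_ne_zero_iff.2 hterm))).1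
    fun p hp => Nat.factorization_prod_add_mul_le hu hgcd n hp

theorem stmt_7 (u₀ r : ℕ) (hr : 1 ≤ r) (hu : 1 ≤ u₀) (hgcd : Nat.gcd u₀ r = 1)
    (n : ℕ) :
    (∏ k ∈ Finset.range (n + 1), (u₀ + k * r))
      ∣ Nat.factorial n * Finset.lcm (Finset.range (n + 1)) (fun k => u₀ + k * r) :=
  stmt_7_general u₀ r hu hgcd n
end

section
/- Let (u_k) be an arithmetic progression of integers with common difference r ≥ 1 and first term u_0 ≥ 1 with gcd(u_0, r) = 1. Then for every natural number n, lcm(u_0, u_1, ..., u_n) ≥ u_0 (1+r)^n. -/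
/-!
Hong–Feng: for a window `u_m, …, u_{m+k}` of the progression, the product of its terms
divides `k! · lcm(u_m, …, u_{m+k})`. Prime by prime, `v_p` of the product counts the pairs
`(j, e)` with `p^e ∣ u_{m+j}`; since `p^e` is coprime to `r`, at most `⌊k / p^e⌋ + 1` of the
`k + 1` terms are divisible by `p^e`, and the `+1` only occurs when `p^e` divides the lcm.
Summing over `e` gives Legendre's formula for `v_p(k!)` plus `v_p` of the lcm.

It remains to choose the window well: starting from `(m, k) = (0, 0)` and moving `n ↦ n + 1`,
either extend the window by one term (if `k + 1 ≤ u_m`) or slide it by one step; in both cases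
`k! · u_0 (1 + r)^n ≤ u_m ⋯ u_{m+k}` is preserved, with `m + k = n`.
-/

open Finset Nat

section ArithmeticProgression

variable {a r : ℕ}

theorem lcm_add_mul_ne_zero (ha : a ≠ 0) (s : Finset ℕ) : s.lcm (fun j => a + j * r) ≠ 0 :=
  lcm_eq_zero_iff.not.2 fun ⟨_, _, h⟩ => ha (Nat.eq_zero_of_add_eq_zero_right h)

theorem card_filter_dvd_add_mul_le (h : Coprime a r) (d k : ℕ) :
    #{j ∈ range (k + 1) | d ∣ a + j * r} ≤ k / d + 1 := by
  calc #{j ∈ range (k + 1) | d ∣ a + j * r} ≤ #(range (k / d + 1)) := by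
        refine card_le_card_of_injOn (· / d) ?_ ?_
        · intro j hj
          simp only [coe_filter, mem_range, Set.mem_ofPred_eq, coe_range, Set.mem_Iio] at hj ⊢
          exact Nat.lt_succ_of_le (Nat.div_le_div_right (Nat.le_of_lt_succ hj.1))
        · intro i hi j hj hij
          simp only [coe_filter, mem_range, Set.mem_ofPred_eq] at hi hj
          have hdr : Coprime d r := ((coprime_add_mul_right_left a r i).2 h).coprime_dvd_left hi.2
          have hmod : i ≡ j [MOD d] :=
            ModEq.cancel_right_of_coprime hdr <| ModEq.add_left_cancel' a <|
              (modEq_zero_iff_dvd.2 hi.2).trans (modEq_zero_iff_dvd.2 hj.2).symm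
          rw [← div_add_mod i d, ← div_add_mod j d, show i / d = j / d from hij, hmod]
    _ = k / d + 1 := card_range _

theorem card_filter_dvd_add_mul_le_ite (h : Coprime a r) (d k : ℕ) :
    #{j ∈ range (k + 1) | d ∣ a + j * r} ≤
      k / d + if d ∣ (range (k + 1)).lcm (fun j => a + j * r) then 1 else 0 := by
  split_ifs with hdL
  · exact card_filter_dvd_add_mul_le h d k
  · rw [card_eq_zero.2 (filter_eq_empty_iff.2 fun j hj hd => hdL (hd.trans (dvd_lcm hj)))]
    exact Nat.zero_le _

theorem prod_add_mul_dvd_factorial_mul_lcm (h : Coprime a r) (k : ℕ) :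
    ∏ j ∈ range (k + 1), (a + j * r) ∣ k ! * (range (k + 1)).lcm (fun j => a + j * r) := by
  set L := (range (k + 1)).lcm (fun j => a + j * r)
  rcases Nat.eq_zero_or_pos a with rfl | ha
  · rw [show L = 0 from lcm_eq_zero_iff.2 ⟨0, mem_range.2 k.succ_pos, by simp⟩, mul_zero]
    exact dvd_zero _
  have hu : ∀ j, a + j * r ≠ 0 := fun j => by positivity
  have hL : L ≠ 0 := lcm_add_mul_ne_zero ha.ne' _
  refine (factorization_prime_le_iff_dvd (prod_ne_zero_iff.2 fun j _ => hu j)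
    (mul_ne_zero (factorial_ne_zero k) hL)).1 fun p hp => ?_
  set b := L + k
  have hLb : L < p ^ b := (Nat.lt_pow_self hp.one_lt).trans_le
    (Nat.pow_le_pow_right hp.pos (Nat.le_add_right L k))
  have hub : ∀ j ∈ range (k + 1), a + j * r < p ^ b := fun j hj =>
    (Nat.le_of_dvd (Nat.pos_of_ne_zero hL) (dvd_lcm hj)).trans_lt hLb
  have hkb : log p k < b := (log_le_self p k).trans_lt (by omega)
  rw [Nat.factorization_prod fun j _ => hu j, Nat.factorization_mul (factorial_ne_zero k) hL,
    Finsupp.add_apply, factorization_factorial hp hkb,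
    factorization_eq_card_pow_dvd_of_lt hp (Nat.pos_of_ne_zero hL) hLb, Finset.sum_apply']
  calc ∑ j ∈ range (k + 1), (a + j * r).factorization p
      = ∑ j ∈ range (k + 1), #{e ∈ Ico 1 b | p ^ e ∣ a + j * r} :=
        sum_congr rfl fun j hj =>
          factorization_eq_card_pow_dvd_of_lt hp (Nat.pos_of_ne_zero (hu j)) (hub j hj)
    _ = ∑ e ∈ Ico 1 b, #{j ∈ range (k + 1) | p ^ e ∣ a + j * r} := by
        simp only [card_filter]
        exact sum_comm
    _ ≤ ∑ e ∈ Ico 1 b, (k / p ^ e + if p ^ e ∣ L then 1 else 0) :=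
        sum_le_sum fun e _ => card_filter_dvd_add_mul_le_ite h _ k
    _ = ∑ e ∈ Ico 1 b, k / p ^ e + #{e ∈ Ico 1 b | p ^ e ∣ L} := by
        rw [sum_add_distrib, card_filter]

theorem exists_factorial_mul_pow_le_prod_window (a r n : ℕ) :
    ∃ m k, m + k = n ∧
      k ! * (a * (1 + r) ^ n) ≤ ∏ j ∈ range (k + 1), (a + m * r + j * r) := by
  induction n with
  | zero => exact ⟨0, 0, rfl, by simp⟩
  | succ n ih =>
    obtain ⟨m, k, rfl, h⟩ := ih
    rcases le_or_gt (k + 1) (a + m * r) with hk | hk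
    · refine ⟨m, k + 1, by ring, ?_⟩
      rw [prod_range_succ, factorial_succ]
      calc (k + 1) * k ! * (a * (1 + r) ^ (m + k + 1))
          = k ! * (a * (1 + r) ^ (m + k)) * ((k + 1) * (1 + r)) := by ring
        _ ≤ (∏ j ∈ range (k + 1), (a + m * r + j * r)) * (a + m * r + (k + 1) * r) :=
          Nat.mul_le_mul h (by nlinarith)
    · refine ⟨m + 1, k, by ring, ?_⟩
      set C := ∏ j ∈ range k, (a + (m + 1) * r + j * r)
      have hslide : ∏ j ∈ range (k + 1), (a + m * r + j * r) = C * (a + m * r) := by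
        rw [prod_range_succ']
        congr 1
        · exact prod_congr rfl fun j _ => by ring
        · ring
      rw [hslide] at h
      rw [prod_range_succ]
      calc k ! * (a * (1 + r) ^ (m + k + 1)) = k ! * (a * (1 + r) ^ (m + k)) * (1 + r) := by ring
        _ ≤ C * (a + m * r) * (1 + r) := Nat.mul_le_mul_right _ h
        _ = C * ((1 + r) * (a + m * r)) := by ring
        _ ≤ C * (a + (m + 1) * r + k * r) := Nat.mul_le_mul_left _ (by nlinarith)

end ArithmeticProgression

theorem stmt_8_general (u₀ r : ℕ) (hu : 1 ≤ u₀) (hgcd : Nat.gcd u₀ r = 1)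
    (n : ℕ) :
    u₀ * (1 + r) ^ n ≤ Finset.lcm (Finset.range (n + 1)) (fun k => u₀ + k * r) := by
  obtain ⟨m, k, rfl, hprod⟩ := exists_factorial_mul_pow_le_prod_window u₀ r n
  set L := Finset.lcm (range (m + k + 1)) (fun i => u₀ + i * r)
  have hwindow : (range (k + 1)).lcm (fun j => u₀ + m * r + j * r) ∣ L :=
    Finset.lcm_dvd fun j hj => by
      rw [add_assoc, ← add_mul]
      exact dvd_lcm (mem_range.2 (by simp only [mem_range] at hj; omega))
  have hdvd : ∏ j ∈ range (k + 1), (u₀ + m * r + j * r) ∣ k ! * L :=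
    (prod_add_mul_dvd_factorial_mul_lcm ((coprime_add_mul_right_left u₀ r m).2 hgcd) k).trans
      (mul_dvd_mul_left _ hwindow)
  have hL : 0 < L := Nat.pos_of_ne_zero (lcm_add_mul_ne_zero (by omega) _)
  exact Nat.le_of_mul_le_mul_left (hprod.trans (Nat.le_of_dvd (by positivity) hdvd))
    (factorial_pos k)

theorem stmt_8 (u₀ r : ℕ) (hr : 1 ≤ r) (hu : 1 ≤ u₀) (hgcd : Nat.gcd u₀ r = 1)
    (n : ℕ) :
    u₀ * (1 + r) ^ n ≤ Finset.lcm (Finset.range (n + 1)) (fun k => u₀ + k * r) :=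
  stmt_8_general u₀ r hu hgcd n
end

section
/- For all positive integers c, m, n with m ≤ n, lcm(m²+c, (m+1)²+c, ..., n²+c) ≥ m · C(n, m). -/
/-!
In `ℤ√(-c)` we have `k² + c = (√-c + k)(k - √-c)`, so `L = lcm (k² + c)` is divisible by each of
the consecutive elements `√-c + k`, `m ≤ k ≤ n`. Taking differences, the product of `N + 1`
consecutive elements of a commutative ring each dividing `L` divides `N! L`. Passing to norms,
`∏ (k² + c) ∣ (N! L)²` with `N = n - m`; since `∏ k² ≤ ∏ (k² + c)` this gives
`m (m + 1) ⋯ n ≤ N! L`, and `m (m + 1) ⋯ n = m · C(n, m) · N!`.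
-/

open Finset Nat

theorem prod_range_add_dvd_factorial_mul {R : Type*} [CommRing R] {M : R} :
    ∀ {N : ℕ} {a : R}, (∀ j ≤ N, a + j ∣ M) → ∏ j ∈ range (N + 1), (a + j) ∣ N ! * M
  | 0, a, h => by simpa using h 0 le_rfl
  | N + 1, a, h => by
    have hlow : ∏ j ∈ range (N + 1), (a + j) ∣ N ! * M :=
      prod_range_add_dvd_factorial_mul fun j hj => h j (by omega)
    have hhigh : ∏ j ∈ range (N + 1), (a + 1 + j) ∣ N ! * M :=
      prod_range_add_dvd_factorial_mul fun j hj => by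
        simpa only [cast_succ, add_assoc, add_comm (1 : R)] using h (j + 1) (by omega)
    have hdiff : (N + 1)! * M = (a + (N + 1 : ℕ)) * (N ! * M) - a * (N ! * M) := by
      push_cast [factorial_succ]
      ring
    rw [hdiff]
    refine dvd_sub ?_ ?_
    · rw [prod_range_succ, mul_comm (a + _)]
      exact mul_dvd_mul_right hlow _
    · rw [prod_range_succ', cast_zero, add_zero, mul_comm]
      refine mul_dvd_mul_left a ?_
      simpa only [cast_succ, add_assoc, add_comm (1 : R)] using hhigh

namespace Zsqrtd

theorem norm_sqrtd_add_natCast (c k : ℕ) :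
    (sqrtd + (k : ℤ√(-c))).norm = (k : ℤ) ^ 2 + c := by
  simp only [norm_def, re_add, re_sqrtd, re_natCast, im_add, im_sqrtd, im_natCast]
  ring

theorem sqrtd_add_natCast_dvd (c k : ℕ) : sqrtd + (k : ℤ√(-c)) ∣ ((k ^ 2 + c : ℕ) : ℤ√(-c)) :=
  Dvd.intro _ <| by
    rw [← norm_eq_mul_conj, norm_sqrtd_add_natCast]
    push_cast
    rfl

end Zsqrtd

theorem prod_sq_add_dvd_sq_factorial_mul_lcm (c m N : ℕ) :
    ∏ j ∈ range (N + 1), ((m + j) ^ 2 + c) ∣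
      (N ! * (Icc m (m + N)).lcm (fun k => k ^ 2 + c)) ^ 2 := by
  set L := (Icc m (m + N)).lcm (fun k => k ^ 2 + c)
  have hdvd : ∀ j ≤ N, Zsqrtd.sqrtd + (m : ℤ√(-c)) + (j : ℤ√(-c)) ∣ (L : ℤ√(-c)) := by
    intro j hj
    have hk : (m + j) ^ 2 + c ∣ L := dvd_lcm (mem_Icc.2 ⟨by omega, by omega⟩)
    rw [add_assoc, ← Nat.cast_add]
    exact (Zsqrtd.sqrtd_add_natCast_dvd c (m + j)).trans (Nat.cast_dvd_cast hk)
  have hnorm := map_dvd Zsqrtd.normMonoidHom (prod_range_add_dvd_factorial_mul hdvd)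
  rw [map_prod] at hnorm
  change ∏ j ∈ range (N + 1), Zsqrtd.norm (Zsqrtd.sqrtd + (m : ℤ√(-c)) + (j : ℤ√(-c))) ∣
    Zsqrtd.norm (((N ! : ℕ) : ℤ√(-c)) * (L : ℤ√(-c))) at hnorm
  simp only [add_assoc, ← Nat.cast_add, Zsqrtd.norm_sqrtd_add_natCast, Zsqrtd.norm_mul,
    Zsqrtd.norm_natCast] at hnorm
  rw [← Int.natCast_dvd_natCast]
  convert hnorm using 1 <;> push_cast <;> ring

theorem ascFactorial_succ_eq_mul_choose_mul_factorial (m N : ℕ) :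
    m.ascFactorial (N + 1) = m * (m + N).choose m * N ! := by
  rw [add_comm N, ← ascFactorial_mul_ascFactorial, ascFactorial_eq_factorial_mul_choose,
    choose_symm_add, ascFactorial_succ, ascFactorial_zero]
  ring

theorem stmt_9_general (c m n : ℕ) (hm : 0 < m) (hmn : m ≤ n) :
    m * Nat.choose n m ≤ Finset.lcm (Finset.Icc m n) (fun k => k ^ 2 + c) := by
  obtain ⟨N, rfl⟩ := Nat.exists_eq_add_of_le hmn
  set L := (Icc m (m + N)).lcm (fun k => k ^ 2 + c)
  have hL : L ≠ 0 := by
    rw [Ne, Finset.lcm_eq_zero_iff]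
    rintro ⟨k, hk, hk0⟩
    have := (mem_Icc.1 hk).1
    simp_all
  have hsq : (m.ascFactorial (N + 1)) ^ 2 ≤ (N ! * L) ^ 2 := calc
    _ = ∏ j ∈ range (N + 1), (m + j) ^ 2 := by rw [ascFactorial_eq_prod_range, prod_pow]
    _ ≤ ∏ j ∈ range (N + 1), ((m + j) ^ 2 + c) := prod_le_prod' fun _ _ => le_add_right le_rfl
    _ ≤ (N ! * L) ^ 2 :=
      Nat.le_of_dvd (by positivity) (prod_sq_add_dvd_sq_factorial_mul_lcm c m N)
  rw [ascFactorial_succ_eq_mul_choose_mul_factorial, mul_comm _ N !,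
    Nat.pow_le_pow_iff_left two_ne_zero] at hsq
  exact Nat.le_of_mul_le_mul_left hsq (factorial_pos N)

theorem stmt_9 (c m n : ℕ) (hc : 0 < c) (hm : 0 < m) (hmn : m ≤ n) :
    m * Nat.choose n m ≤ Finset.lcm (Finset.Icc m n) (fun k => k ^ 2 + c) :=
  stmt_9_general c m n hm hmn
end

section
/- For all positive integers c, m, n with m ≤ ⌈n/2⌉, lcm(m²+c, (m+1)²+c, ..., n²+c) ≥ 2^n. -/
/-!
Write `z = √c i` and `L` for the lcm. Partial fractions give
`∑ⱼ (-1)ʲ C(N, j) / (x + j) = N! / ∏ⱼ (x + j)`; at `x = m - z` every term `L / (m + j - z)`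
equals `(L / ((m + j)² + c)) (m + j + z)`, so `L N! / ∏ⱼ (m + j - z)` is a nonzero element
`a + b z` of `ℤ[√-c]`. Its squared modulus `a² + c b²` is a positive integer, hence
`∏_{m ≤ k ≤ n} (k² + c) ≤ (L (n - m)!)²`. For `m = ⌈n/2⌉` and `n ≥ 5` the left side is at least
`4ⁿ (⌊n/2⌋!)²` (induction in steps of two), which gives `L ≥ 2ⁿ`; for `n ≤ 4` already
`n² + 1 ≥ 2ⁿ`.
-/

open Finset Nat Complex

theorem sum_range_choose_mul_div_eq_factorial_div_prod {K : Type*} [Field K] (N : ℕ) (x : K)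
    (hx : ∀ j ≤ N, x + j ≠ 0) :
    ∑ j ∈ range (N + 1), N.choose j * ((-1) ^ j / (x + j)) =
      N ! / ∏ j ∈ range (N + 1), (x + j) := by
  induction N generalizing x with
  | zero => simp
  | succ N ih =>
    have hx₀ : ∀ j ≤ N, x + j ≠ 0 := fun j hj => hx j (by omega)
    have hx₁ : ∀ j ≤ N, x + 1 + j ≠ 0 := fun j hj => by
      simpa [add_assoc, add_comm (1 : K)] using hx (j + 1) (by omega)
    have hP : ∏ j ∈ range (N + 1), (x + j) ≠ 0 :=
      prod_ne_zero_iff.mpr fun j hj => hx₀ j (mem_range_succ_iff.mp hj)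
    have hP₁ : ∏ j ∈ range (N + 1), (x + 1 + j) ≠ 0 :=
      prod_ne_zero_iff.mpr fun j hj => hx₁ j (mem_range_succ_iff.mp hj)
    have hlast : ∏ j ∈ range (N + 1 + 1), (x + j) =
        (∏ j ∈ range (N + 1), (x + j)) * (x + (N + 1 : ℕ)) := prod_range_succ _ _
    have hfirst : ∏ j ∈ range (N + 1 + 1), (x + j) = x * ∏ j ∈ range (N + 1), (x + 1 + j) := by
      rw [prod_range_succ']; push_cast; simp only [add_assoc, add_comm (1 : K)]; ring
    have hneg : ∀ i ∈ range (N + 1), (N.choose i : K) * ((-1) ^ (i + 1) / (x + (i + 1 : ℕ))) =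
        -(N.choose i * ((-1) ^ i / (x + 1 + i))) := fun i _ => by
      push_cast; rw [add_assoc, add_comm (1 : K)]; ring
    rw [sum_choose_succ_mul (fun i _ => (-1 : K) ^ i / (x + i)), sum_congr rfl hneg,
      sum_neg_distrib, ih x hx₀, ih (x + 1) hx₁,
      eq_div_iff (hlast ▸ mul_ne_zero hP (hx (N + 1) le_rfl)), add_mul, neg_mul]
    nth_rewrite 1 [hlast]
    rw [hfirst]
    field_simp
    push_cast [factorial_succ]
    ring

theorem normSq_intCast_add_mul_sqrt_mul_I (c : ℕ) (a b : ℤ) :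
    normSq (a + b * (√c * I)) = a ^ 2 + c * b ^ 2 := by
  rw [← mul_assoc, ← ofReal_intCast, ← ofReal_intCast, ← ofReal_mul, normSq_add_mul_I,
    mul_pow, Real.sq_sqrt c.cast_nonneg]
  ring

theorem one_le_normSq_intCast_add_mul_sqrt_mul_I {c : ℕ} {a b : ℤ}
    (h : (a + b * (√c * I) : ℂ) ≠ 0) : 1 ≤ normSq (a + b * (√c * I)) := by
  have hpos := normSq_pos.mpr h
  rw [normSq_intCast_add_mul_sqrt_mul_I] at hpos ⊢
  exact_mod_cast (show (0 : ℤ) < a ^ 2 + c * b ^ 2 by exact_mod_cast hpos)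

theorem normSq_natCast_sub_sqrt_mul_I (c k : ℕ) : normSq (k - √c * I) = k ^ 2 + c := by
  simpa [← sub_eq_add_neg] using normSq_intCast_add_mul_sqrt_mul_I c k (-1)

theorem natCast_div_natCast_sub_sqrt_mul_I {c k L : ℕ} (hc : 0 < c) (hdvd : k ^ 2 + c ∣ L) :
    (L : ℂ) / (k - √c * I) = (L / (k ^ 2 + c) : ℕ) * (k + √c * I) := by
  have hne : (k - √c * I : ℂ) ≠ 0 := by
    rw [← normSq_pos, normSq_natCast_sub_sqrt_mul_I]; positivity
  have hsq : ((√c : ℂ) * I) ^ 2 = -c := by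
    rw [mul_pow, I_sq, ← ofReal_pow, Real.sq_sqrt c.cast_nonneg]; simp
  obtain ⟨u, rfl⟩ := hdvd
  rw [Nat.mul_div_cancel_left u (by positivity), div_eq_iff hne]
  push_cast
  linear_combination (u : ℂ) * hsq

theorem exists_intCast_add_mul_sqrt_mul_I_mul_prod_eq {c m N L : ℕ} (hc : 0 < c)
    (hdvd : ∀ j ≤ N, (m + j) ^ 2 + c ∣ L) :
    ∃ a b : ℤ, (a + b * (√c * I)) * ∏ j ∈ range (N + 1), ((m + j : ℕ) - √c * I) = L * N ! := by
  have hshift : ∀ j : ℕ, (m - √c * I + j : ℂ) = (m + j : ℕ) - √c * I := fun j => by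
    push_cast; ring
  have hx : ∀ j ≤ N, (m - √c * I + j : ℂ) ≠ 0 := fun j _ => by
    rw [hshift, ← normSq_pos, normSq_natCast_sub_sqrt_mul_I]; positivity
  set u : ℕ → ℕ := fun j => L / ((m + j) ^ 2 + c)
  refine ⟨∑ j ∈ range (N + 1), N.choose j * (-1) ^ j * u j * (m + j : ℕ),
    ∑ j ∈ range (N + 1), N.choose j * (-1) ^ j * u j, ?_⟩
  simp only [← hshift]
  rw [← eq_div_iff (prod_ne_zero_iff.mpr fun j hj => hx j (mem_range_succ_iff.mp hj)),
    mul_div_assoc, ← sum_range_choose_mul_div_eq_factorial_div_prod N _ hx, mul_sum]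
  push_cast
  rw [sum_mul, ← sum_add_distrib]
  refine sum_congr rfl fun j hj => ?_
  rw [show ∀ y : ℂ, (L : ℂ) * (N.choose j * ((-1) ^ j / y)) = N.choose j * (-1) ^ j * (L / y)
    from fun y => by ring, hshift,
    natCast_div_natCast_sub_sqrt_mul_I hc (hdvd j (mem_range_succ_iff.mp hj))]
  push_cast
  ring

theorem prod_sq_add_le_sq_mul_factorial {c m N L : ℕ} (hc : 0 < c) (hL : 0 < L)
    (hdvd : ∀ j ≤ N, (m + j) ^ 2 + c ∣ L) :
    ∏ j ∈ range (N + 1), ((m + j) ^ 2 + c) ≤ (L * N !) ^ 2 := by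
  obtain ⟨a, b, h⟩ := exists_intCast_add_mul_sqrt_mul_I_mul_prod_eq hc hdvd
  have hw : (a + b * (√c * I) : ℂ) ≠ 0 := left_ne_zero_of_mul <| h ▸
    mul_ne_zero (Nat.cast_ne_zero.mpr hL.ne') (Nat.cast_ne_zero.mpr (factorial_ne_zero N))
  have hnormSq := congrArg normSq h
  simp only [map_mul, map_prod, normSq_natCast, normSq_natCast_sub_sqrt_mul_I] at hnormSq
  have hle : (∏ j ∈ range (N + 1), (((m + j : ℕ) : ℝ) ^ 2 + c)) ≤ ((L * N ! : ℕ) : ℝ) ^ 2 :=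
    calc _ ≤ normSq (a + b * (√c * I)) * ∏ j ∈ range (N + 1), (((m + j : ℕ) : ℝ) ^ 2 + c) :=
          le_mul_of_one_le_left (by positivity) (one_le_normSq_intCast_add_mul_sqrt_mul_I hw)
      _ = ((L * N ! : ℕ) : ℝ) ^ 2 := by rw [hnormSq]; push_cast; ring
  exact_mod_cast hle

theorem prod_Icc_sq_add_le_sq_lcm_mul_factorial {c m n : ℕ} (hc : 0 < c) (hmn : m ≤ n) :
    ∏ k ∈ Icc m n, (k ^ 2 + c) ≤ ((Icc m n).lcm (fun k => k ^ 2 + c) * (n - m)!) ^ 2 := by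
  obtain ⟨N, rfl⟩ := Nat.exists_eq_add_of_le hmn
  have hlcm : 0 < (Icc m (m + N)).lcm (fun k => k ^ 2 + c) :=
    Nat.pos_of_ne_zero fun h => by
      obtain ⟨k, -, hk⟩ := lcm_eq_zero_iff.mp h
      omega
  have hrange : ∏ k ∈ Icc m (m + N), (k ^ 2 + c) = ∏ j ∈ range (N + 1), ((m + j) ^ 2 + c) := by
    rw [← Ico_add_one_right_eq_Icc, prod_Ico_eq_prod_range, show m + N + 1 - m = N + 1 by omega]
  rw [hrange, Nat.add_sub_cancel_left]
  exact prod_sq_add_le_sq_mul_factorial hc hlcm fun j hj =>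
    dvd_lcm (mem_Icc.mpr ⟨by omega, by omega⟩)

theorem sq_half_add_one_mul_le (n : ℕ) (hn : 2 ≤ n) :
    16 * (n / 2 + 1) ^ 2 * (((n + 1) / 2) ^ 2 + 1) ≤ ((n + 1) ^ 2 + 1) * ((n + 2) ^ 2 + 1) := by
  obtain ⟨a, rfl | rfl⟩ := Nat.even_or_odd' n
  · rw [show (2 * a + 1) / 2 = a by omega, show 2 * a / 2 = a by omega]
    nlinarith
  · rw [show (2 * a + 1 + 1) / 2 = a + 1 by omega, show (2 * a + 1) / 2 = a by omega]
    nlinarith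

theorem four_pow_mul_sq_factorial_le_prod (n : ℕ) (hn : 5 ≤ n) :
    4 ^ n * ((n / 2)!) ^ 2 ≤ ∏ k ∈ Icc ((n + 1) / 2) n, (k ^ 2 + 1) := by
  induction n using Nat.strong_induction_on with
  | _ n ih =>
    obtain ⟨p, rfl⟩ : ∃ p, n = p + 2 := ⟨n - 2, by omega⟩
    by_cases hp : p < 5
    · obtain rfl | rfl : p = 3 ∨ p = 4 := by omega
      all_goals decide
    set m₀ := (p + 1) / 2
    have hm₀ : (p + 2 + 1) / 2 = m₀ + 1 := by omega
    have hsplit : (m₀ ^ 2 + 1) * ∏ k ∈ Icc (m₀ + 1) (p + 2), (k ^ 2 + 1) =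
        (∏ k ∈ Icc m₀ p, (k ^ 2 + 1)) * (((p + 1) ^ 2 + 1) * ((p + 2) ^ 2 + 1)) := by
      rw [Icc_add_one_left_eq_Ioc, mul_prod_Ioc_eq_prod_Icc (f := fun k => k ^ 2 + 1) (by omega),
        prod_Icc_succ_top (by omega), prod_Icc_succ_top (by omega), mul_assoc]
    rw [hm₀, show (p + 2) / 2 = p / 2 + 1 by omega]
    refine Nat.le_of_mul_le_mul_left ?_ (by positivity : 0 < m₀ ^ 2 + 1)
    calc (m₀ ^ 2 + 1) * (4 ^ (p + 2) * ((p / 2 + 1)!) ^ 2)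
        = 4 ^ p * ((p / 2)!) ^ 2 * (16 * (p / 2 + 1) ^ 2 * (m₀ ^ 2 + 1)) := by
          rw [factorial_succ]; ring
      _ ≤ (∏ k ∈ Icc m₀ p, (k ^ 2 + 1)) * (((p + 1) ^ 2 + 1) * ((p + 2) ^ 2 + 1)) :=
          Nat.mul_le_mul (ih p (by omega) (by omega)) (sq_half_add_one_mul_le p (by omega))
      _ = (m₀ ^ 2 + 1) * ∏ k ∈ Icc (m₀ + 1) (p + 2), (k ^ 2 + 1) := hsplit.symm

theorem stmt_10_general (c m n : ℕ) (hc : 0 < c)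
    (hmn : m ≤ (n + 1) / 2) :
    2 ^ n ≤ Finset.lcm (Finset.Icc m n) (fun k => k ^ 2 + c) := by
  have hlcm : 0 < (Icc m n).lcm (fun k => k ^ 2 + c) :=
    Nat.pos_of_ne_zero fun h => by
      obtain ⟨k, -, hk⟩ := lcm_eq_zero_iff.mp h
      omega
  rcases lt_or_ge n 5 with hsmall | hlarge
  · calc 2 ^ n ≤ n ^ 2 + c := by interval_cases n <;> omega
      _ ≤ (Icc m n).lcm (fun k => k ^ 2 + c) :=
          Nat.le_of_dvd hlcm (dvd_lcm (mem_Icc.mpr ⟨by omega, le_rfl⟩))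
  · set m₀ := (n + 1) / 2
    have hbound : (2 ^ n * (n / 2)!) ^ 2 ≤ ((Icc m₀ n).lcm (fun k => k ^ 2 + c) * (n / 2)!) ^ 2 :=
      calc (2 ^ n * (n / 2)!) ^ 2 = 4 ^ n * ((n / 2)!) ^ 2 := by
            rw [mul_pow, ← pow_mul, pow_mul']; norm_num
        _ ≤ ∏ k ∈ Icc m₀ n, (k ^ 2 + 1) := four_pow_mul_sq_factorial_le_prod n hlarge
        _ ≤ ∏ k ∈ Icc m₀ n, (k ^ 2 + c) := prod_le_prod' fun k _ => by omega
        _ ≤ _ := by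
          rw [show n / 2 = n - m₀ by omega]
          exact prod_Icc_sq_add_le_sq_lcm_mul_factorial hc (by omega)
    calc 2 ^ n ≤ (Icc m₀ n).lcm (fun k => k ^ 2 + c) :=
          Nat.le_of_mul_le_mul_right ((Nat.pow_le_pow_iff_left two_ne_zero).mp hbound)
            (factorial_pos _)
      _ ≤ (Icc m n).lcm (fun k => k ^ 2 + c) :=
          Nat.le_of_dvd hlcm (lcm_mono (Icc_subset_Icc_left hmn))

theorem stmt_10 (c m n : ℕ) (hc : 0 < c) (hm : 0 < m) (hn : 0 < n)
    (hmn : m ≤ (n + 1) / 2) :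
    2 ^ n ≤ Finset.lcm (Finset.Icc m n) (fun k => k ^ 2 + c) :=
  stmt_10_general c m n hc hmn
end

section
/- Let c, m, n be positive integers with m ≤ n. Then c · (n-m)! · (∏_{k=1}^{n-m} (k² + 4c)) · lcm(m²+c, ..., n²+c) is divisible by ∏_{k=m}^{n} (k²+c). -/
/-!
Fix a prime `p`. With `S_α = {k ∈ [m, n] | p ^ α ∣ k ^ 2 + c}`, the `p`-adic valuation of the
product exceeds that of the lcm by `∑_α (#S_α - 1)`. Suppose first `p ^ 2 ∤ c`. For `x < y` in
`S_α`, `p ^ α` divides `(y - x)(y + x)`, and the identity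
`(y - x) ^ 2 + 4c = 4 (x ^ 2 + c) + 2 (y + x)(y - x) - (y + x) ^ 2`
shows that `p ^ α` divides `2 (y - x)` with `p ^ α ∤ 2`, or `(y - x) ^ 2 + 4c`. Comparing every
element of `S_α` with the least one, `#S_α - 1` is at most the number of `d ≤ n - m` of these
two kinds, and summing over `α` gives `v_p((n - m)!) + ∑_d v_p(d ^ 2 + 4c)`.
If `p ^ 2 ∣ c`, only multiples `k = p k'` contribute, each with `v_p(k'^2 + c / p ^ 2) + 2`, and
induction on `c` applies to the `k'`, which form a set of diameter at most `(n - m) / p`.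
-/

open Finset
open scoped Nat

theorem Prime.pow_dvd_or_pow_dvd_of_dvd_mul {M : Type*} [CommMonoidWithZero M]
    [IsCancelMulZero M] {p a b : M} (hp : Prime p) {n : ℕ} (h : p ^ n ∣ a * b)
    (hab : ¬(p ∣ a ∧ p ∣ b)) : p ^ n ∣ a ∨ p ^ n ∣ b := by
  by_cases ha : p ∣ a
  · exact .inl (hp.pow_dvd_of_dvd_mul_right n (fun hb => hab ⟨ha, hb⟩) h)
  · exact .inr (hp.pow_dvd_of_dvd_mul_left n ha h)

theorem dvd_sub_sq_add_four_mul {R : Type*} [CommRing R] {q x y c : R} (hx : q ∣ x ^ 2 + c)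
    (h : q ∣ 2 * (y + x)) (h' : q ∣ (y + x) ^ 2) : q ∣ (y - x) ^ 2 + 4 * c := by
  rw [show (y - x) ^ 2 + 4 * c = 4 * (x ^ 2 + c) + 2 * (y + x) * (y - x) - (y + x) ^ 2 by ring]
  exact dvd_sub (dvd_add (hx.mul_left 4) (h.mul_right _)) h'

theorem Finset.card_le_card_add_one_of_sub_mem {S T : Finset ℕ}
    (h : ∀ x ∈ S, ∀ y ∈ S, x < y → y - x ∈ T) : #S ≤ #T + 1 := by
  rcases S.eq_empty_or_nonempty with rfl | hS
  · simp
  set x₀ := S.min' hS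
  have hx₀ : x₀ ∈ S := S.min'_mem hS
  rw [← card_erase_add_one hx₀]
  refine Nat.add_le_add_right (card_le_card_of_injOn (· - x₀) (fun y hy => ?_) ?_) 1
  · exact h x₀ hx₀ y (mem_of_mem_erase hy)
      ((S.min'_le y (mem_of_mem_erase hy)).lt_of_ne (ne_of_mem_erase hy).symm)
  · intro a ha b hb hab
    have := S.min'_le a (mem_of_mem_erase ha)
    have := S.min'_le b (mem_of_mem_erase hb)
    simp only at hab
    omega

theorem Finset.sum_card_filter_comm {α β : Type*} {s : Finset α} {t : Finset β}
    {r : α → β → Prop} [∀ a b, Decidable (r a b)] :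
    ∑ a ∈ s, #{b ∈ t | r a b} = ∑ b ∈ t, #{a ∈ s | r a b} :=
  sum_card_bipartiteAbove_eq_sum_card_bipartiteBelow r

namespace Int

theorem pow_dvd_sub_sq_add_four_mul_of_dvd {p c x y : ℤ} (hp : Prime p) (hpc : p ∣ c)
    (hc : ¬p ^ 2 ∣ c) {α : ℕ} (hx : p ^ α ∣ x ^ 2 + c) (hy : p ^ α ∣ y ^ 2 + c) :
    p ^ α ∣ (y - x) ^ 2 + 4 * c := by
  have dvd_of_dvd {z : ℤ} (hz : p ∣ z ^ 2 + c) : p ∣ z :=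
    hp.dvd_of_dvd_pow ((dvd_add_left hpc).1 hz)
  match α with
  | 0 => simp
  | 1 =>
    rw [pow_one] at *
    exact dvd_add (dvd_pow (dvd_sub (dvd_of_dvd hy) (dvd_of_dvd hx)) two_ne_zero) (hpc.mul_left 4)
  | α + 2 =>
    have hx2 : p ^ 2 ∣ x ^ 2 + c := (pow_dvd_pow p (by omega)).trans hx
    have hpx : p ∣ x := dvd_of_dvd ((dvd_pow_self p two_ne_zero).trans hx2)
    exact absurd ((dvd_add_right (pow_dvd_pow_of_dvd hpx 2)).1 hx2) hc

theorem pow_dvd_two_mul_sub_or_pow_dvd_of_not_dvd_two {p c x y : ℤ} (hp : Prime p)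
    (hp2 : ¬p ∣ 2) (hc : ¬p ∣ c) {α : ℕ} (hx : p ^ α ∣ x ^ 2 + c) (hy : p ^ α ∣ y ^ 2 + c) :
    (p ^ α ∣ 2 * (y - x) ∧ ¬p ^ α ∣ 2) ∨ p ^ α ∣ (y - x) ^ 2 + 4 * c := by
  obtain _ | α := α
  · simp
  have hprod : p ^ (α + 1) ∣ (y - x) * (y + x) := (dvd_sub hy hx).trans (dvd_of_eq (by ring))
  have hcoprime : ¬(p ∣ y - x ∧ p ∣ y + x) := by
    rintro ⟨hsub, hadd⟩
    have h2x : p ∣ 2 * x := (dvd_sub hadd hsub).trans (dvd_of_eq (by ring))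
    have hpx : p ∣ x := (hp.dvd_or_dvd h2x).resolve_left hp2
    exact hc ((dvd_add_right (dvd_pow hpx two_ne_zero)).1 ((dvd_pow_self p (by omega)).trans hx))
  rcases hp.pow_dvd_or_pow_dvd_of_dvd_mul hprod hcoprime with hsub | hadd
  · exact .inl ⟨hsub.mul_left 2, fun h => hp2 ((dvd_pow_self p (by omega)).trans h)⟩
  · exact .inr (dvd_sub_sq_add_four_mul hx (hadd.mul_left 2) (dvd_pow hadd two_ne_zero))

theorem two_pow_dvd_two_mul_sub_or_two_pow_dvd {c x y : ℤ} (hc : Odd c) {α : ℕ}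
    (hx : 2 ^ α ∣ x ^ 2 + c) (hy : 2 ^ α ∣ y ^ 2 + c) :
    (2 ^ α ∣ 2 * (y - x) ∧ ¬(2 : ℤ) ^ α ∣ 2) ∨ 2 ^ α ∣ (y - x) ^ 2 + 4 * c := by
  obtain _ | α := α
  · simp
  have odd_of_dvd {z : ℤ} (hz : 2 ^ (α + 1) ∣ z ^ 2 + c) : Odd z :=
    (odd_pow' two_ne_zero).1 ((even_add'.1 (even_iff_two_dvd.2
      ((dvd_pow_self 2 (by omega)).trans hz))).2 hc)
  obtain ⟨a, rfl⟩ := odd_of_dvd hx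
  obtain ⟨b, rfl⟩ := odd_of_dvd hy
  obtain _ | α := α
  · exact .inr ⟨2 * (b - a) ^ 2 + 2 * c, by ring⟩
  have hprod : 2 ^ α ∣ (b - a) * (a + b + 1) := by
    have : (2 : ℤ) ^ (α + 2) ∣ 2 ^ 2 * ((b - a) * (a + b + 1)) :=
      (dvd_sub hy hx).trans (dvd_of_eq (by ring))
    rwa [pow_add, mul_comm, mul_dvd_mul_iff_left (by norm_num)] at this
  -- the two factors add up to the odd number `2 * b + 1`
  have hcoprime : ¬(2 ∣ b - a ∧ 2 ∣ a + b + 1) := fun ⟨h1, h2⟩ =>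
    not_even_two_mul_add_one b (even_iff_two_dvd.2 ((dvd_add h1 h2).trans (dvd_of_eq (by ring))))
  rcases prime_two.pow_dvd_or_pow_dvd_of_dvd_mul hprod hcoprime with hsub | hadd
  · refine .inl ⟨?_, fun h => absurd ((pow_dvd_pow 2 (by omega : 2 ≤ α + 2)).trans h)
      (by norm_num)⟩
    exact (dvd_of_eq (by ring)).trans ((mul_dvd_mul_left (2 ^ 2) hsub).trans (dvd_of_eq (by ring)))
  · have h4 : (2 : ℤ) ^ (α + 2) ∣ 4 * (a + b + 1) := by
      rw [pow_add, mul_comm]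
      exact mul_dvd_mul (by norm_num) hadd
    refine .inr (dvd_sub_sq_add_four_mul hx (h4.trans (dvd_of_eq ?_))
      ((h4.mul_right (a + b + 1)).trans (dvd_of_eq ?_))) <;> ring

end Int

namespace Nat

variable {p : ℕ}

/-- For odd `p` the first alternative says `p ^ α ∣ y - x`; for `p = 2` it says
`2 ^ (α - 1) ∣ y - x` with `α ≥ 2`. This shift is what keeps the number of such differences
`d ≤ L`, summed over `α`, within `v_p(L!)` (see `card_filter_pow_dvd_two_mul_le`). -/
theorem pow_dvd_two_mul_sub_or_pow_dvd_sub_sq_add (hp : p.Prime) {c x y α : ℕ}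
    (hc : ¬p ^ 2 ∣ c) (hxy : x ≤ y) (hx : p ^ α ∣ x ^ 2 + c) (hy : p ^ α ∣ y ^ 2 + c) :
    (p ^ α ∣ 2 * (y - x) ∧ ¬p ^ α ∣ 2) ∨ p ^ α ∣ (y - x) ^ 2 + 4 * c := by
  have hp' : _root_.Prime (p : ℤ) := prime_iff_prime_int.1 hp
  zify [hxy] at hx hy hc ⊢
  by_cases hpc : (p : ℤ) ∣ c
  · exact .inr (Int.pow_dvd_sub_sq_add_four_mul_of_dvd hp' hpc hc hx hy)
  by_cases hp2 : p = 2
  · subst hp2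
    exact Int.two_pow_dvd_two_mul_sub_or_two_pow_dvd
      (Int.not_even_iff_odd.1 fun h => hpc (even_iff_two_dvd.1 h)) hx hy
  · refine Int.pow_dvd_two_mul_sub_or_pow_dvd_of_not_dvd_two hp' (fun h => hp2 ?_) hpc hx hy
    exact (prime_dvd_prime_iff_eq hp prime_two).1 (by exact_mod_cast h)

theorem card_filter_pow_dvd_Icc (hp : p.Prime) {x : ℕ} (hx : x ≠ 0) (M : ℕ) :
    #{α ∈ Icc 1 M | p ^ α ∣ x} = min M (x.factorization p) := by
  rw [show {α ∈ Icc 1 M | p ^ α ∣ x} = Icc 1 (min M (x.factorization p)) by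
    ext α; simp only [mem_filter, mem_Icc, hp.pow_dvd_iff_le_factorization hx]; omega]
  simp

theorem card_filter_pow_dvd_two_mul_le (hp : p.Prime) {d : ℕ} (hd : d ≠ 0) (M : ℕ) :
    #{α ∈ Icc 1 M | p ^ α ∣ 2 * d ∧ ¬p ^ α ∣ 2} ≤ d.factorization p := by
  have h2d : (2 * d).factorization p = (2 : ℕ).factorization p + d.factorization p := by
    simp [factorization_mul two_ne_zero hd]
  calc #{α ∈ Icc 1 M | p ^ α ∣ 2 * d ∧ ¬p ^ α ∣ 2}
      ≤ #(Ioc ((2 : ℕ).factorization p) ((2 : ℕ).factorization p + d.factorization p)) := by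
        refine card_le_card fun α => ?_
        simp only [mem_filter, mem_Ioc, h2d, hp.pow_dvd_iff_le_factorization two_ne_zero,
          hp.pow_dvd_iff_le_factorization (mul_ne_zero two_ne_zero hd)]
        omega
    _ = d.factorization p := by simp

theorem factorization_factorial_eq_sum (L : ℕ) :
    (L)!.factorization p = ∑ d ∈ Icc 1 L, d.factorization p := by
  induction L with
  | zero => simp
  | succ L ih =>
    rw [factorial_succ, factorization_mul (succ_ne_zero L) (factorial_ne_zero L),
      Finsupp.add_apply, ih, sum_Icc_succ_top (by omega), add_comm]

theorem factorization_sq_mul (hp : p.Prime) {x : ℕ} (hx : x ≠ 0) :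
    (p ^ 2 * x).factorization p = x.factorization p + 2 := by
  simp [factorization_mul (pow_ne_zero 2 hp.ne_zero) hx, hp.factorization_self, add_comm]

theorem factorization_sq_add_sq_mul (hp : p.Prime) {z e : ℕ} (h : z ^ 2 + e ≠ 0) :
    ((p * z) ^ 2 + p ^ 2 * e).factorization p = (z ^ 2 + e).factorization p + 2 := by
  rw [show (p * z) ^ 2 + p ^ 2 * e = p ^ 2 * (z ^ 2 + e) by ring, factorization_sq_mul hp h]

theorem sum_Icc_div_comp_mul_le (hp : 0 < p) (f : ℕ → ℕ) (L : ℕ) :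
    ∑ d ∈ Icc 1 (L / p), f (p * d) ≤ ∑ d ∈ Icc 1 L, f d := by
  rw [← sum_image fun x _ y _ hxy => mul_left_cancel₀ hp.ne' hxy]
  refine sum_le_sum_of_subset fun d hd => ?_
  obtain ⟨d, hd', rfl⟩ := mem_image.1 hd
  simp only [mem_Icc] at hd' ⊢
  exact ⟨one_le_mul hp hd'.1, (Nat.mul_le_mul_left p hd'.2).trans (mul_div_le L p)⟩

theorem card_filter_pow_dvd_sq_add_le (hp : p.Prime) {c : ℕ} (hc : ¬p ^ 2 ∣ c)
    {K : Finset ℕ} {L : ℕ} (hK : ∀ x ∈ K, ∀ y ∈ K, x ≤ y → y - x ≤ L) (α : ℕ) :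
    #{k ∈ K | p ^ α ∣ k ^ 2 + c} ≤
      #{d ∈ Icc 1 L | p ^ α ∣ 2 * d ∧ ¬p ^ α ∣ 2} + #{d ∈ Icc 1 L | p ^ α ∣ d ^ 2 + 4 * c} + 1 := by
  refine (card_le_card_add_one_of_sub_mem fun x hx y hy hxy => ?_).trans
    (Nat.add_le_add_right (card_union_le _ _) 1)
  simp only [mem_filter] at hx hy
  have hd : y - x ∈ Icc 1 L := mem_Icc.2 ⟨by omega, hK x hx.1 y hy.1 hxy.le⟩
  rcases pow_dvd_two_mul_sub_or_pow_dvd_sub_sq_add hp hc hxy.le hx.2 hy.2 with h | h <;>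
    simp [hd, h]

theorem sum_factorization_sq_add_le (hp : p.Prime) {c : ℕ} (hc0 : c ≠ 0) (hc : ¬p ^ 2 ∣ c)
    {K : Finset ℕ} {L : ℕ} (hK : ∀ x ∈ K, ∀ y ∈ K, x ≤ y → y - x ≤ L) :
    ∑ k ∈ K, (k ^ 2 + c).factorization p ≤
      (L)!.factorization p + ∑ d ∈ Icc 1 L, (d ^ 2 + 4 * c).factorization p +
        K.sup fun k => (k ^ 2 + c).factorization p := by
  set M := K.sup fun k => (k ^ 2 + c).factorization p
  calc ∑ k ∈ K, (k ^ 2 + c).factorization p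
      = ∑ k ∈ K, #{α ∈ Icc 1 M | p ^ α ∣ k ^ 2 + c} := by
        refine sum_congr rfl fun k hk => ?_
        rw [card_filter_pow_dvd_Icc hp (by positivity)]
        exact (min_eq_right (le_sup (f := fun k => (k ^ 2 + c).factorization p) hk)).symm
    _ = ∑ α ∈ Icc 1 M, #{k ∈ K | p ^ α ∣ k ^ 2 + c} := sum_card_filter_comm
    _ ≤ ∑ α ∈ Icc 1 M, (#{d ∈ Icc 1 L | p ^ α ∣ 2 * d ∧ ¬p ^ α ∣ 2} +
          #{d ∈ Icc 1 L | p ^ α ∣ d ^ 2 + 4 * c} + 1) :=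
        sum_le_sum fun α _ => card_filter_pow_dvd_sq_add_le hp hc hK α
    _ = ∑ d ∈ Icc 1 L, #{α ∈ Icc 1 M | p ^ α ∣ 2 * d ∧ ¬p ^ α ∣ 2} +
          ∑ d ∈ Icc 1 L, #{α ∈ Icc 1 M | p ^ α ∣ d ^ 2 + 4 * c} + M := by
        rw [sum_add_distrib, sum_add_distrib, sum_card_filter_comm,
          sum_card_filter_comm (s := Icc 1 M)]
        simp
    _ ≤ ∑ d ∈ Icc 1 L, d.factorization p + ∑ d ∈ Icc 1 L, (d ^ 2 + 4 * c).factorization p + M := by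
        gcongr with d hd d
        · exact card_filter_pow_dvd_two_mul_le hp (one_le_iff_ne_zero.1 (mem_Icc.1 hd).1) M
        · exact (card_filter_pow_dvd_Icc hp (by positivity) M).trans_le (min_le_right _ _)
    _ = _ := by rw [factorization_factorial_eq_sum]

/-- The `p`-adic form of the theorem, for a finite set `K` of diameter at most `L` in place of
the interval `[m, n]`; this is the form that survives the descent `c ↦ c / p ^ 2`. -/
def QuadraticValuationBound (p c : ℕ) : Prop :=
  ∀ (K : Finset ℕ) (L : ℕ), (∀ x ∈ K, ∀ y ∈ K, x ≤ y → y - x ≤ L) →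
    ∑ k ∈ K, (k ^ 2 + c).factorization p ≤
      c.factorization p + (L)!.factorization p + ∑ d ∈ Icc 1 L, (d ^ 2 + 4 * c).factorization p +
        K.sup fun k => (k ^ 2 + c).factorization p

theorem quadraticValuationBound_of_not_sq_dvd (hp : p.Prime) {c : ℕ} (hc0 : c ≠ 0)
    (hc : ¬p ^ 2 ∣ c) : QuadraticValuationBound p c := fun _ _ hK =>
  (sum_factorization_sq_add_le hp hc0 hc hK).trans (by omega)

theorem QuadraticValuationBound.sq_mul (hp : p.Prime) {c : ℕ} (hc : c ≠ 0)
    (h : QuadraticValuationBound p c) : QuadraticValuationBound p (p ^ 2 * c) := by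
  intro K L hK
  have hinj : Set.InjOn (p * ·) ((p * ·) ⁻¹' ↑K) := (mul_right_injective₀ hp.ne_zero).injOn
  set K' := K.preimage (p * ·) hinj
  have hsum : ∑ k ∈ K, (k ^ 2 + p ^ 2 * c).factorization p =
      ∑ k ∈ K', ((k ^ 2 + c).factorization p + 2) := by
    rw [← sum_preimage (p * ·) K hinj]
    · exact sum_congr rfl fun z _ => factorization_sq_add_sq_mul hp (by positivity)
    · intro k _ hk
      refine factorization_eq_zero_of_not_dvd fun hdvd => hk ?_
      have hpc : p ∣ p ^ 2 * c := dvd_mul_of_dvd_left (dvd_pow_self p two_ne_zero) c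
      obtain ⟨j, rfl⟩ := hp.dvd_of_dvd_pow ((Nat.dvd_add_left hpc).1 hdvd)
      exact ⟨j, rfl⟩
  have hK' : ∀ x ∈ K', ∀ y ∈ K', x ≤ y → y - x ≤ L / p := by
    intro x hx y hy hxy
    rw [le_div_iff_mul_le hp.pos, Nat.sub_mul]
    simpa [mul_comm] using hK _ (mem_preimage.1 hx) _ (mem_preimage.1 hy) (mul_le_mul_left p hxy)
  have hcard : #K' ≤ L / p + 1 := by
    simpa using card_le_card_add_one_of_sub_mem (T := Icc 1 (L / p))
      fun x hx y hy hxy => mem_Icc.2 ⟨by omega, hK' x hx y hy hxy.le⟩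
  have hsup : (K'.sup fun k => (k ^ 2 + c).factorization p) ≤
      K.sup fun k => (k ^ 2 + p ^ 2 * c).factorization p :=
    Finset.sup_le fun k hk => calc
      (k ^ 2 + c).factorization p ≤ ((p * k) ^ 2 + p ^ 2 * c).factorization p := by
        rw [factorization_sq_add_sq_mul hp (by positivity)]; omega
      _ ≤ _ := le_sup (f := fun k => (k ^ 2 + p ^ 2 * c).factorization p) (mem_preimage.1 hk)
  have hfact : (L / p)!.factorization p ≤ (L)!.factorization p :=
    (factorization_le_iff_dvd (factorial_ne_zero _) (factorial_ne_zero _)).2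
      (factorial_dvd_factorial (div_le_self L p)) p
  have hdiff : ∑ d ∈ Icc 1 (L / p), ((d ^ 2 + 4 * c).factorization p + 2) ≤
      ∑ d ∈ Icc 1 L, (d ^ 2 + 4 * (p ^ 2 * c)).factorization p := by
    refine le_of_eq_of_le (sum_congr rfl fun d _ => ?_)
      (sum_Icc_div_comp_mul_le hp.pos (fun d => (d ^ 2 + 4 * (p ^ 2 * c)).factorization p) L)
    rw [mul_left_comm 4, factorization_sq_add_sq_mul hp (by positivity)]
  have := h K' (L / p) hK'
  rw [sum_add_distrib, sum_const, smul_eq_mul, card_Icc] at hdiff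
  rw [hsum, sum_add_distrib, sum_const, smul_eq_mul, factorization_sq_mul hp hc]
  omega

theorem quadraticValuationBound (hp : p.Prime) {c : ℕ} (hc : c ≠ 0) :
    QuadraticValuationBound p c := by
  induction c using Nat.strong_induction_on with
  | _ c ih =>
    by_cases hpc : p ^ 2 ∣ c
    · obtain ⟨c, rfl⟩ := hpc
      have hc' : c ≠ 0 := right_ne_zero_of_mul hc
      have hlt : c < p ^ 2 * c :=
        lt_mul_left (pos_of_ne_zero hc') (one_lt_pow two_ne_zero hp.one_lt)
      exact (ih c hlt hc').sq_mul hp hc'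
    · exact quadraticValuationBound_of_not_sq_dvd hp hc hpc

end Nat

theorem stmt_12_general (c m n : ℕ) (hc : 0 < c) :
    (∏ k ∈ Finset.Icc m n, (k ^ 2 + c))
      ∣ c * Nat.factorial (n - m) * (∏ k ∈ Finset.Icc 1 (n - m), (k ^ 2 + 4 * c))
          * Finset.lcm (Finset.Icc m n) (fun k => k ^ 2 + c) := by
  have hf : ∀ k, k ^ 2 + c ≠ 0 := fun k => by positivity
  have hlcm : (Icc m n).lcm (fun k => k ^ 2 + c) ≠ 0 := fun h => by
    obtain ⟨k, -, hk⟩ := Finset.lcm_eq_zero_iff.1 h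
    exact hf k hk
  have hc0 : c * (n - m)! ≠ 0 := by positivity
  have hprod : ∏ d ∈ Icc 1 (n - m), (d ^ 2 + 4 * c) ≠ 0 := by positivity
  refine (Nat.factorization_prime_le_iff_dvd (by positivity)
    (mul_ne_zero (mul_ne_zero hc0 hprod) hlcm)).1 fun p hp => ?_
  rw [Nat.factorization_mul (mul_ne_zero hc0 hprod) hlcm, Nat.factorization_mul hc0 hprod,
    Nat.factorization_mul hc.ne' (Nat.factorial_ne_zero _), Nat.factorization_prod fun k _ => hf k,
    Nat.factorization_prod fun d _ => by positivity]
  simp only [Finsupp.add_apply, Finsupp.finsetSum_apply, factorization_lcm fun k _ => hf k]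
  exact Nat.quadraticValuationBound hp hc.ne' (Icc m n) (n - m) fun x hx y hy _ => by
    simp only [mem_Icc] at hx hy; omega

theorem stmt_12 (c m n : ℕ) (hc : 0 < c) (hm : 0 < m) (hmn : m ≤ n) :
    (∏ k ∈ Finset.Icc m n, (k ^ 2 + c))
      ∣ c * Nat.factorial (n - m) * (∏ k ∈ Finset.Icc 1 (n - m), (k ^ 2 + 4 * c))
          * Finset.lcm (Finset.Icc m n) (fun k => k ^ 2 + c) :=
  stmt_12_general c m n hc
end

section
/- Let N, a, b be integers with (a,b) ≠ (0,0) and c a positive integer. Then N is divisible by (a + b√(-c)) in the ring ℤ[√(-c)] if and only if N is divisible in ℤ by (a² + c·b²)/gcd(a,b). -/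
namespace Zsqrtd

/-- If `u a + v b = 1`, then `ay + bx = 0` forces `x + y√d = k (a - b√d)` with `k = ux - vy`;
multiplying through by `g` avoids having to cancel it. -/
theorem intCast_mul_dvd_intCast_iff_of_isCoprime {d a b g N : ℤ} (hab : IsCoprime a b) :
    (g : ℤ√d) * ⟨a, b⟩ ∣ (N : ℤ√d) ↔ g * (⟨a, b⟩ : ℤ√d).norm ∣ N := by
  rw [norm_def]
  constructor
  · rintro ⟨⟨x, y⟩, hz⟩
    have hre := congrArg re hz
    have him := congrArg im hz
    simp only [re_intCast, im_intCast, re_mul, im_mul, zero_mul, mul_zero, add_zero] at hre him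
    obtain ⟨u, v, huv⟩ := hab
    exact ⟨u * x - v * y, by
      linear_combination hre - (u * d * b + v * a) * him - g * (a * x + d * b * y) * huv⟩
  · rintro ⟨k, rfl⟩
    exact ⟨⟨k * a, -(k * b)⟩, by ext <;> simp only [re_intCast, im_intCast, re_mul, im_mul] <;> ring⟩

end Zsqrtd

theorem stmt_14_general (c : ℕ) (N a b : ℤ) (hab : (a, b) ≠ (0, 0)) :
    ((⟨a, b⟩ : Zsqrtd (-(c : ℤ))) ∣ (N : Zsqrtd (-(c : ℤ))))
      ↔ ((a ^ 2 + (c : ℤ) * b ^ 2) / (Int.gcd a b : ℤ)) ∣ N := by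
  have hg : 0 < Int.gcd a b := Int.gcd_pos_iff.2 (by
    contrapose! hab
    simp [hab])
  obtain ⟨a', b', hcop, ha, hb⟩ := Int.exists_gcd_one hg
  have hmk : (⟨a, b⟩ : ℤ√(-c)) = ((Int.gcd a b : ℤ) : ℤ√(-c)) * ⟨a', b'⟩ := by
    ext <;> simp only [Zsqrtd.re_mul, Zsqrtd.im_mul, Zsqrtd.re_intCast, Zsqrtd.im_intCast]
    · linear_combination ha
    · linear_combination hb
  have hquot : (a ^ 2 + c * b ^ 2) / (Int.gcd a b : ℤ)
      = Int.gcd a b * (⟨a', b'⟩ : ℤ√(-c)).norm := by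
    refine Int.ediv_eq_of_eq_mul_right (by exact_mod_cast hg.ne') ?_
    rw [Zsqrtd.norm_def]
    linear_combination (a + a' * Int.gcd a b) * ha + c * (b + b' * Int.gcd a b) * hb
  rw [hmk, hquot]
  exact Zsqrtd.intCast_mul_dvd_intCast_iff_of_isCoprime (Int.isCoprime_iff_gcd_eq_one.2 hcop)

theorem stmt_14 (c : ℕ) (hc : 0 < c) (N a b : ℤ) (hab : (a, b) ≠ (0, 0)) :
    ((⟨a, b⟩ : Zsqrtd (-(c : ℤ))) ∣ (N : Zsqrtd (-(c : ℤ))))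
      ↔ ((a ^ 2 + (c : ℤ) * b ^ 2) / (Int.gcd a b : ℤ)) ∣ N :=
  stmt_14_general c N a b hab
end

section
/- Let A be a commutative integral domain, n a positive integer, and u_0, ..., u_n, a, b elements of A. Suppose each u_i divides a, and for each i the product ∏_{j≠i} (u_i - u_j) divides b. Then u_0 u_1 ⋯ u_n divides a·b. -/
/-!
If the `u i` are distinct, Lagrange interpolation of the constant `1` at the nodes `u i`,
evaluated at `0`, gives `1 = ∑ i, ∏ j ≠ i, (0 - u j) / (u i - u j)`. Multiplying by `a * b`,
the `i`-th term becomes `(a / u i) * (b / ∏ j ≠ i, (u i - u j)) * u i * ∏ j ≠ i, (0 - u j)`,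
a multiple of `∏ i, u i` in `A`. If two of the `u i` coincide, some `∏ j ≠ i, (u i - u j)`
vanishes, so `b = 0`.
-/

open Finset

theorem Lagrange.sum_prod_sub_div_sub_eq_one {ι F : Type*} [Field F] [DecidableEq ι]
    {s : Finset ι} {v : ι → F} (hvs : Set.InjOn v s) (hs : s.Nonempty) (x : F) :
    ∑ i ∈ s, ∏ j ∈ s.erase i, (x - v j) / (v i - v j) = 1 := by
  have h := congrArg (Polynomial.eval x) (Lagrange.sum_basis hvs hs)
  simpa [Polynomial.eval_finsetSum, Lagrange.basis, Polynomial.eval_prod,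
    Lagrange.basisDivisor, div_eq_inv_mul] using h

theorem prod_erase_sub_ne_zero {ι A : Type*} [CommRing A] [IsDomain A] [DecidableEq ι]
    {s : Finset ι} {u : ι → A} (hus : Set.InjOn u s) {i : ι} (hi : i ∈ s) :
    ∏ j ∈ s.erase i, (u i - u j) ≠ 0 := by
  refine prod_ne_zero_iff.mpr fun j hj => sub_ne_zero_of_ne fun h => ?_
  exact ne_of_mem_erase hj (hus (mem_of_mem_erase hj) hi h.symm)

theorem eq_sum_mul_prod_sub_of_prod_sub_mul_eq {ι A : Type*} [CommRing A] [IsDomain A]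
    [DecidableEq ι] {s : Finset ι} {u : ι → A} (hus : Set.InjOn u s) (hs : s.Nonempty)
    {b : A} {c : ι → A} (hc : ∀ i ∈ s, (∏ j ∈ s.erase i, (u i - u j)) * c i = b) (x : A) :
    b = ∑ i ∈ s, c i * ∏ j ∈ s.erase i, (x - u j) := by
  let φ := algebraMap A (FractionRing A)
  have hφ : Function.Injective φ := IsFractionRing.injective A (FractionRing A)
  have hc' : ∀ i ∈ s, φ b / ∏ j ∈ s.erase i, (φ (u i) - φ (u j)) = φ (c i) := by
    intro i hi
    have hD := (map_ne_zero_iff φ hφ).mpr (prod_erase_sub_ne_zero hus hi)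
    simp only [map_prod, map_sub] at hD
    rw [div_eq_iff hD, ← hc i hi]
    simp only [map_mul, map_prod, map_sub, mul_comm]
  apply hφ
  calc φ b = φ b * ∑ i ∈ s, ∏ j ∈ s.erase i, (φ x - φ (u j)) / (φ (u i) - φ (u j)) := by
        rw [Lagrange.sum_prod_sub_div_sub_eq_one (v := fun i => φ (u i)) (hφ.comp_injOn hus) hs,
          mul_one]
    _ = ∑ i ∈ s, φ (c i) * ∏ j ∈ s.erase i, (φ x - φ (u j)) := by
        rw [mul_sum]
        refine sum_congr rfl fun i hi => ?_
        rw [← hc' i hi, prod_div_distrib]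
        ring
    _ = φ (∑ i ∈ s, c i * ∏ j ∈ s.erase i, (x - u j)) := by
        simp only [map_sum, map_mul, map_prod, map_sub]

theorem prod_dvd_mul_of_dvd_of_prod_sub_dvd {ι A : Type*} [CommRing A] [IsDomain A]
    [DecidableEq ι] {s : Finset ι} {u : ι → A} {a b : A} (ha : ∀ i ∈ s, u i ∣ a)
    (hb : ∀ i ∈ s, (∏ j ∈ s.erase i, (u i - u j)) ∣ b) :
    ∏ i ∈ s, u i ∣ a * b := by
  by_cases hus : Set.InjOn u s
  · rcases s.eq_empty_or_nonempty with rfl | hs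
    · simp
    choose! c hc using hb
    rw [eq_sum_mul_prod_sub_of_prod_sub_mul_eq hus hs (fun i hi => (hc i hi).symm) 0, mul_sum]
    refine dvd_sum fun i hi => ?_
    rw [← mul_prod_erase s u hi, mul_left_comm]
    refine dvd_mul_of_dvd_right (mul_dvd_mul (ha i hi) (prod_dvd_prod_of_dvd _ _ ?_)) _
    simp
  · obtain ⟨i, hi, j, hj, huij, hij⟩ : ∃ i ∈ s, ∃ j ∈ s, u i = u j ∧ i ≠ j := by
      simpa [Set.InjOn] using hus
    have hD : ∏ k ∈ s.erase i, (u i - u k) = 0 :=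
      prod_eq_zero (mem_erase.mpr ⟨hij.symm, hj⟩) (sub_eq_zero.mpr huij)
    have hb0 := hb i hi
    rw [hD, zero_dvd_iff] at hb0
    simp [hb0]

theorem stmt_15_general {A : Type*} [CommRing A] [IsDomain A] (n : ℕ)
    (u : ℕ → A) (a b : A)
    (h1 : ∀ i ∈ Finset.range (n + 1), u i ∣ a)
    (h2 : ∀ i ∈ Finset.range (n + 1),
        (∏ j ∈ (Finset.range (n + 1)).erase i, (u i - u j)) ∣ b) :
    (∏ i ∈ Finset.range (n + 1), u i) ∣ a * b :=
  prod_dvd_mul_of_dvd_of_prod_sub_dvd h1 h2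

theorem stmt_15 {A : Type*} [CommRing A] [IsDomain A] (n : ℕ) (hn : 0 < n)
    (u : ℕ → A) (a b : A)
    (h1 : ∀ i ∈ Finset.range (n + 1), u i ∣ a)
    (h2 : ∀ i ∈ Finset.range (n + 1),
        (∏ j ∈ (Finset.range (n + 1)).erase i, (u i - u j)) ∣ b) :
    (∏ i ∈ Finset.range (n + 1), u i) ∣ a * b :=
  stmt_15_general n u a b h1 h2
end

section
/- Let (u_n)_{n≥1} be a sequence of positive integers and define a_n = ∏_{d | n} u_d. Then the sequence (a_n) is a strong divisibility sequence (i.e., gcd(a_n, a_m) = a_{gcd(n,m)} for all n, m ≥ 1) if and only if gcd(u_n, u_m) = 1 for all n, m ≥ 1 such that n does not divide m and m does not divide n. -/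
/-!
The divisors of `gcd n m` are the common divisors of `n` and `m`, so
`a n = a (gcd n m) * ∏_{d ∣ n, d ∤ m} u d`, and hence
`gcd (a n) (a m) = a (gcd n m) * gcd (∏_{d ∣ n, d ∤ m} u d, ∏_{e ∣ m, e ∤ n} u e)`.
As `a (gcd n m) > 0`, strong divisibility means that these two products are always coprime.
Any such `d` and `e` are incomparable under divisibility, and `d = n`, `e = m` is such a pair
when `n` and `m` are incomparable.
-/

open Finset

namespace Nat

theorem divisors_gcd {n m : ℕ} (hn : n ≠ 0) (hm : m ≠ 0) :
    (gcd n m).divisors = n.divisors ∩ m.divisors := by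
  ext d
  simp [dvd_gcd_iff, hn, hm]

theorem self_mem_divisors_sdiff {n m : ℕ} (hn : n ≠ 0) (hnm : ¬ n ∣ m) :
    n ∈ n.divisors \ m.divisors := by
  simp [hn, hnm]

theorem not_dvd_of_mem_divisors_sdiff {n m d e : ℕ} (hd : d ∈ n.divisors \ m.divisors)
    (he : e ∈ m.divisors) : ¬ d ∣ e := fun hde =>
  (mem_sdiff.mp hd).2 (mem_divisors.mpr ⟨hde.trans (mem_divisors.mp he).1, (mem_divisors.mp he).2⟩)

theorem prod_divisors_eq_prod_divisors_gcd_mul {M : Type*} [CommMonoid M] (f : ℕ → M) {n m : ℕ}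
    (hn : n ≠ 0) (hm : m ≠ 0) :
    ∏ d ∈ n.divisors, f d =
      (∏ d ∈ (gcd n m).divisors, f d) * ∏ d ∈ n.divisors \ m.divisors, f d := by
  rw [divisors_gcd hn hm, prod_inter_mul_prod_sdiff]

theorem gcd_prod_divisors (u : ℕ → ℕ) {n m : ℕ} (hn : n ≠ 0) (hm : m ≠ 0) :
    gcd (∏ d ∈ n.divisors, u d) (∏ d ∈ m.divisors, u d) =
      (∏ d ∈ (gcd n m).divisors, u d) *
        gcd (∏ d ∈ n.divisors \ m.divisors, u d) (∏ d ∈ m.divisors \ n.divisors, u d) := by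
  rw [prod_divisors_eq_prod_divisors_gcd_mul u hn hm,
    prod_divisors_eq_prod_divisors_gcd_mul u hm hn, gcd_comm m n, gcd_mul_left]

theorem coprime_prod_divisors_sdiff {u : ℕ → ℕ}
    (hu : ∀ d e, d ≠ 0 → e ≠ 0 → ¬ d ∣ e → ¬ e ∣ d → Coprime (u d) (u e)) {n m : ℕ} :
    Coprime (∏ d ∈ n.divisors \ m.divisors, u d) (∏ e ∈ m.divisors \ n.divisors, u e) := by
  refine Coprime.prod_left fun d hd => Coprime.prod_right fun e he => ?_
  have hd' := (mem_sdiff.mp hd).1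
  have he' := (mem_sdiff.mp he).1
  exact hu d e (pos_of_mem_divisors hd').ne' (pos_of_mem_divisors he').ne'
    (not_dvd_of_mem_divisors_sdiff hd he') (not_dvd_of_mem_divisors_sdiff he hd')

theorem gcd_prod_divisors_eq_prod_divisors_gcd_iff {u : ℕ → ℕ} (hu : ∀ d, 0 < d → 0 < u d)
    {n m : ℕ} (hn : n ≠ 0) (hm : m ≠ 0) :
    gcd (∏ d ∈ n.divisors, u d) (∏ d ∈ m.divisors, u d) = ∏ d ∈ (gcd n m).divisors, u d ↔
      Coprime (∏ d ∈ n.divisors \ m.divisors, u d) (∏ e ∈ m.divisors \ n.divisors, u e) := by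
  rw [gcd_prod_divisors u hn hm,
    Nat.mul_eq_left (prod_pos fun d hd => hu d (pos_of_mem_divisors hd)).ne']

end Nat

theorem stmt_16 (u : ℕ → ℕ) (hu : ∀ n, 1 ≤ n → 0 < u n)
    (a : ℕ → ℕ) (ha : ∀ n, a n = ∏ d ∈ n.divisors, u d) :
    (∀ n m, 1 ≤ n → 1 ≤ m → Nat.gcd (a n) (a m) = a (Nat.gcd n m))
      ↔ (∀ n m, 1 ≤ n → 1 ≤ m → ¬ n ∣ m → ¬ m ∣ n → Nat.gcd (u n) (u m) = 1) := by
  obtain rfl : a = fun n => ∏ d ∈ n.divisors, u d := funext ha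
  constructor
  · intro H n m hn hm hnm hmn
    have hn0 : n ≠ 0 := by omega
    have hm0 : m ≠ 0 := by omega
    have hcop := (Nat.gcd_prod_divisors_eq_prod_divisors_gcd_iff hu hn0 hm0).mp (H n m hn hm)
    exact hcop.of_dvd (dvd_prod_of_mem u (Nat.self_mem_divisors_sdiff hn0 hnm))
      (dvd_prod_of_mem u (Nat.self_mem_divisors_sdiff hm0 hmn))
  · intro H n m hn hm
    refine (Nat.gcd_prod_divisors_eq_prod_divisors_gcd_iff hu (by omega) (by omega)).mpr ?_
    exact Nat.coprime_prod_divisors_sdiff fun d e hd he => H d e (by omega) (by omega)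
end

section
/- Let (a_n)_{n≥1} be a sequence of positive integers and define c_1 = a_1 and c_n = lcm(a_1,...,a_n)/lcm(a_1,...,a_{n-1}) for n ≥ 2. Then (a_n) is a strong divisibility sequence if and only if a_n = ∏_{d | n} c_d for all n ≥ 1. -/
/-!
Comparing `p`-adic valuations reduces the theorem to sequences `f : ℕ → ℕ` with `min` in place
of `gcd`: the valuation of `c n` is the jump `M n - M (n - 1)` of the running maximum
`M n = max_{k ≤ n} f k`, so the claim becomes
`min (f n) (f m) = f (gcd n m)` for all `n, m` iff `f n = ∑_{d ∣ n} jump f d` for all `n`.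

Forward: a jump position `d` divides every `g` with `f d ≤ f g`, since otherwise
`f (gcd d g) = f d` would already be attained before `d`. Hence the jumps at proper divisors of `n`
all divide the proper divisor `g` maximising `f`, and induction gives `f g` for their sum, which
is `min (f n) (M (n - 1))`.

Backward: `M (e - 1)` is the sum of all jumps below `e`, while at a jump position `e` the
divisor-sum formula makes it the sum of the jumps at proper divisors of `e` alone. So any two
jump positions divide one another, and a jump at a divisor of `n` but not of `gcd n m`
can then not coexist with one at a divisor of `m` but not of `gcd n m`.
-/

open Finset

namespace StrongDivisibility

lemma sum_eq_sum_divisors_of_dvd {M : Type*} [AddCommMonoid M] {g : ℕ → M} {s : Finset ℕ}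
    {m : ℕ} (hm : m ≠ 0) (hs : m.divisors ⊆ s) (h : ∀ d ∈ s, g d ≠ 0 → d ∣ m) :
    ∑ d ∈ s, g d = ∑ d ∈ m.divisors, g d :=
  (sum_subset hs fun d hd hdm =>
    by_contra fun hg => hdm (Nat.mem_divisors.2 ⟨h d hd hg, hm⟩)).symm

lemma sum_divisors_eq_add_sum_properDivisors {M : Type*} [AddCommMonoid M] (g : ℕ → M) {n : ℕ}
    (hn : n ≠ 0) : ∑ d ∈ n.divisors, g d = g n + ∑ d ∈ n.properDivisors, g d := by
  rw [← Nat.insert_self_properDivisors hn, sum_insert Nat.self_notMem_properDivisors]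

section RunningMax

variable (f : ℕ → ℕ)

def runningMax (n : ℕ) : ℕ := (Icc 1 n).sup f

def jump (n : ℕ) : ℕ := runningMax f n - runningMax f (n - 1)

variable {f}

@[simp]
lemma runningMax_zero : runningMax f 0 = 0 := by
  simp [runningMax]

lemma runningMax_of_pos {n : ℕ} (hn : 1 ≤ n) :
    runningMax f n = max (f n) (runningMax f (n - 1)) := by
  have : Icc 1 n = insert n (Icc 1 (n - 1)) := by
    ext k
    simp only [mem_Icc, mem_insert]
    omega
  rw [runningMax, this, sup_insert]
  rfl

lemma le_runningMax {k n : ℕ} (hk : 1 ≤ k) (hkn : k ≤ n) : f k ≤ runningMax f n :=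
  le_sup (mem_Icc.2 ⟨hk, hkn⟩)

lemma runningMax_mono {m n : ℕ} (hmn : m ≤ n) : runningMax f m ≤ runningMax f n :=
  sup_mono (Icc_subset_Icc_right hmn)

lemma exists_eq_runningMax {n : ℕ} (hn : 1 ≤ n) : ∃ k ∈ Icc 1 n, runningMax f n = f k :=
  exists_mem_eq_sup _ ⟨1, mem_Icc.2 ⟨le_rfl, hn⟩⟩ f

lemma min_add_jump {n : ℕ} (hn : 1 ≤ n) :
    min (f n) (runningMax f (n - 1)) + jump f n = f n := by
  have := runningMax_of_pos (f := f) hn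
  unfold jump
  omega

lemma runningMax_lt_of_jump_ne_zero {n : ℕ} (hn : 1 ≤ n) (h : jump f n ≠ 0) :
    runningMax f (n - 1) < f n := by
  have := runningMax_of_pos (f := f) hn
  unfold jump at h
  omega

lemma one_le_of_jump_ne_zero {n : ℕ} (h : jump f n ≠ 0) : 1 ≤ n := by
  rcases n with _ | n
  · simp [jump] at h
  · omega

lemma sum_Icc_jump (n : ℕ) : ∑ k ∈ Icc 1 n, jump f k = runningMax f n := by
  induction n with
  | zero => simp
  | succ n ih =>
    rw [sum_Icc_succ_top (by omega), ih, jump, Nat.add_sub_cancel]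
    have := runningMax_mono (f := f) (Nat.le_add_right n 1)
    omega

end RunningMax

def IsMinStrongDivSeq (f : ℕ → ℕ) : Prop :=
  ∀ n m, 1 ≤ n → 1 ≤ m → min (f n) (f m) = f (n.gcd m)

namespace IsMinStrongDivSeq

variable {f : ℕ → ℕ} (hf : IsMinStrongDivSeq f)
include hf

lemma le_of_dvd {d n : ℕ} (hn : 1 ≤ n) (hdn : d ∣ n) : f d ≤ f n := by
  have := hf d n (Nat.pos_of_dvd_of_pos hdn hn) hn
  rw [Nat.gcd_eq_left hdn] at this
  omega

lemma dvd_of_jump_ne_zero {d g : ℕ} (hg : 1 ≤ g) (hd : jump f d ≠ 0) (hdg : f d ≤ f g) :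
    d ∣ g := by
  have hd1 := one_le_of_jump_ne_zero hd
  by_contra hndvd
  have hlt : d.gcd g < d :=
    lt_of_le_of_ne (Nat.gcd_le_left g hd1) fun h => hndvd (h ▸ Nat.gcd_dvd_right d g)
  have hbefore : f (d.gcd g) ≤ runningMax f (d - 1) :=
    le_runningMax (Nat.gcd_pos_of_pos_right d hg) (by omega)
  have := hf d g hd1 hg
  have := runningMax_lt_of_jump_ne_zero hd1 hd
  omega

lemma sum_properDivisors_jump {n : ℕ} (hn : 1 ≤ n)
    (ih : ∀ m < n, 1 ≤ m → f m = ∑ d ∈ m.divisors, jump f d) :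
    ∑ d ∈ n.properDivisors, jump f d = min (f n) (runningMax f (n - 1)) := by
  rcases hn.eq_or_lt with rfl | hn1
  · simp
  obtain ⟨g, hg, hgmax⟩ :=
    exists_max_image n.properDivisors f ⟨1, Nat.one_mem_properDivisors_iff_one_lt.2 hn1⟩
  obtain ⟨hgn, hgltn⟩ := Nat.mem_properDivisors.1 hg
  have hg1 : 1 ≤ g := Nat.pos_of_dvd_of_pos hgn hn
  have hsum : ∑ d ∈ n.properDivisors, jump f d = f g := by
    rw [ih g hgltn hg1]
    refine sum_eq_sum_divisors_of_dvd (by omega) (fun d hd => ?_)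
      fun d hd hjd => hf.dvd_of_jump_ne_zero hg1 hjd (hgmax d hd)
    obtain ⟨hdg, -⟩ := Nat.mem_divisors.1 hd
    exact Nat.mem_properDivisors.2
      ⟨hdg.trans hgn, (Nat.le_of_dvd hg1 hdg).trans_lt hgltn⟩
  obtain ⟨k, hk, hkmax⟩ := exists_eq_runningMax (f := f) (n := n - 1) (by omega)
  rw [mem_Icc] at hk
  have hgcd : n.gcd k ∈ n.properDivisors :=
    Nat.mem_properDivisors.2 ⟨Nat.gcd_dvd_left n k, (Nat.gcd_le_right n (by omega)).trans_lt
      (by omega)⟩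
  have hmin_le : min (f n) (runningMax f (n - 1)) ≤ f g := by
    rw [hkmax, hf n k hn hk.1]
    exact hgmax _ hgcd
  have hle_min : f g ≤ min (f n) (runningMax f (n - 1)) :=
    le_min (hf.le_of_dvd hn hgn) (le_runningMax hg1 (by omega))
  omega

lemma eq_sum_divisors_jump {n : ℕ} (hn : 1 ≤ n) : f n = ∑ d ∈ n.divisors, jump f d := by
  induction n using Nat.strong_induction_on with
  | _ n ih =>
    rw [sum_divisors_eq_add_sum_properDivisors _ (by omega),
      hf.sum_properDivisors_jump hn fun m hm => ih m hm, add_comm, min_add_jump hn]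

end IsMinStrongDivSeq

section DivisorSumOfJumps

variable {f : ℕ → ℕ} (hf : ∀ n, 1 ≤ n → f n = ∑ d ∈ n.divisors, jump f d)
include hf

lemma le_of_dvd_of_eq_sum_divisors_jump {d n : ℕ} (hn : 1 ≤ n) (hdn : d ∣ n) :
    f d ≤ f n := by
  have hd : 1 ≤ d := Nat.pos_of_dvd_of_pos hdn hn
  rw [hf n hn, hf d hd]
  exact sum_le_sum_of_subset (Nat.divisors_subset_of_dvd (by omega) hdn)

lemma dvd_of_jump_ne_zero_of_lt {d e : ℕ} (hd : jump f d ≠ 0) (he : jump f e ≠ 0)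
    (hde : d < e) : d ∣ e := by
  have hd1 := one_le_of_jump_ne_zero hd
  have he1 := one_le_of_jump_ne_zero he
  have hproper : ∑ x ∈ e.properDivisors, jump f x = runningMax f (e - 1) := by
    have := hf e he1
    rw [sum_divisors_eq_add_sum_properDivisors _ (by omega)] at this
    have := min_add_jump (f := f) he1
    have := runningMax_lt_of_jump_ne_zero he1 he
    omega
  by_contra hndvd
  have hnotmem : d ∉ e.properDivisors := fun h => hndvd (Nat.mem_properDivisors.1 h).1
  have hsub : insert d e.properDivisors ⊆ Icc 1 (e - 1) := by
    intro x hx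
    rw [mem_insert] at hx
    rcases hx with rfl | hx
    · exact mem_Icc.2 ⟨hd1, by omega⟩
    · obtain ⟨hxe, hxlt⟩ := Nat.mem_properDivisors.1 hx
      exact mem_Icc.2 ⟨Nat.pos_of_dvd_of_pos hxe he1, by omega⟩
  have := sum_le_sum_of_subset (f := jump f) hsub
  rw [sum_insert hnotmem, hproper, sum_Icc_jump] at this
  omega

lemma dvd_or_dvd_of_jump_ne_zero {d e : ℕ} (hd : jump f d ≠ 0) (he : jump f e ≠ 0) :
    d ∣ e ∨ e ∣ d := by
  rcases lt_trichotomy d e with h | rfl | h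
  · exact .inl (dvd_of_jump_ne_zero_of_lt hf hd he h)
  · exact .inl dvd_rfl
  · exact .inr (dvd_of_jump_ne_zero_of_lt hf he hd h)

lemma exists_jump_ne_zero_of_lt {d n : ℕ} (hn : 1 ≤ n) (hdn : d ∣ n) (hlt : f d < f n) :
    ∃ x, x ∣ n ∧ ¬x ∣ d ∧ jump f x ≠ 0 := by
  have hd : 1 ≤ d := Nat.pos_of_dvd_of_pos hdn hn
  by_contra! h
  have : ∑ x ∈ n.divisors, jump f x = ∑ x ∈ d.divisors, jump f x :=
    sum_eq_sum_divisors_of_dvd (by omega) (Nat.divisors_subset_of_dvd (by omega) hdn)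
      fun x hx hjx => by_contra fun hxd => hjx (h x (Nat.dvd_of_mem_divisors hx) hxd)
  rw [← hf n hn, ← hf d hd] at this
  omega

lemma isMinStrongDivSeq_of_eq_sum_divisors_jump : IsMinStrongDivSeq f := by
  intro n m hn hm
  have hgn := Nat.gcd_dvd_left n m
  have hgm := Nat.gcd_dvd_right n m
  refine le_antisymm ?_ (le_min (le_of_dvd_of_eq_sum_divisors_jump hf hn hgn)
    (le_of_dvd_of_eq_sum_divisors_jump hf hm hgm))
  by_contra! hlt
  obtain ⟨x, hxn, hxg, hjx⟩ :=
    exists_jump_ne_zero_of_lt hf hn hgn (hlt.trans_le (min_le_left _ _))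
  obtain ⟨y, hym, hyg, hjy⟩ :=
    exists_jump_ne_zero_of_lt hf hm hgm (hlt.trans_le (min_le_right _ _))
  rcases dvd_or_dvd_of_jump_ne_zero hf hjx hjy with hxy | hyx
  · exact hxg (Nat.dvd_gcd hxn (hxy.trans hym))
  · exact hyg (Nat.dvd_gcd (hyx.trans hxn) hym)

end DivisorSumOfJumps

theorem isMinStrongDivSeq_iff_eq_sum_divisors_jump {f : ℕ → ℕ} :
    IsMinStrongDivSeq f ↔ ∀ n, 1 ≤ n → f n = ∑ d ∈ n.divisors, jump f d :=
  ⟨fun hf _ hn => hf.eq_sum_divisors_jump hn, isMinStrongDivSeq_of_eq_sum_divisors_jump⟩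

section Factorization

lemma lcm_Icc_pred_dvd (a : ℕ → ℕ) (n : ℕ) : (Icc 1 (n - 1)).lcm a ∣ (Icc 1 n).lcm a :=
  lcm_mono (Icc_subset_Icc_right (Nat.sub_le n 1))

variable {a : ℕ → ℕ} (ha : ∀ n, 1 ≤ n → 0 < a n)
include ha

lemma gcd_eq_iff_forall_isMinStrongDivSeq_factorization :
    (∀ n m, 1 ≤ n → 1 ≤ m → Nat.gcd (a n) (a m) = a (Nat.gcd n m)) ↔
      ∀ p, IsMinStrongDivSeq fun n => (a n).factorization p := by
  have hgcd : ∀ n m, 1 ≤ n → 1 ≤ m → ∀ p, (Nat.gcd (a n) (a m)).factorization p =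
      min ((a n).factorization p) ((a m).factorization p) :=
    fun n m hn hm p => by
      rw [Nat.factorization_gcd (ha n hn).ne' (ha m hm).ne', Finsupp.inf_apply]
  constructor
  · intro h p n m hn hm
    rw [← hgcd n m hn hm, h n m hn hm]
  · intro h n m hn hm
    refine Nat.eq_of_factorization_eq (Nat.gcd_pos_of_pos_left _ (ha n hn)).ne'
      (ha _ (Nat.gcd_pos_of_pos_left m hn)).ne' fun p => ?_
    rw [hgcd n m hn hm]
    exact h p n m hn hm

lemma eq_prod_divisors_iff_forall_factorization {c : ℕ → ℕ}
    (hc : ∀ n, 1 ≤ n → c n ≠ 0) :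
    (∀ n, 1 ≤ n → a n = ∏ d ∈ n.divisors, c d) ↔
      ∀ p n, 1 ≤ n →
        (a n).factorization p = ∑ d ∈ n.divisors, (c d).factorization p := by
  have hprod : ∀ n p : ℕ, (∏ d ∈ n.divisors, c d).factorization p =
      ∑ d ∈ n.divisors, (c d).factorization p := fun n p => by
    rw [Nat.factorization_prod fun d hd => hc d (Nat.pos_of_mem_divisors hd),
      Finsupp.finsetSum_apply]
  constructor
  · intro h p n hn
    rw [← hprod, ← h n hn]
  · intro h n hn
    refine Nat.eq_of_factorization_eq (ha n hn).ne'
      (prod_ne_zero_iff.2 fun d hd => hc d (Nat.pos_of_mem_divisors hd)) fun p => ?_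
    rw [hprod, h p n hn]

lemma lcm_Icc_ne_zero (n : ℕ) : (Icc 1 n).lcm a ≠ 0 :=
  lcm_ne_zero_iff.2 fun i hi => (ha i (mem_Icc.1 hi).1).ne'

lemma lcm_Icc_div_ne_zero (n : ℕ) : (Icc 1 n).lcm a / (Icc 1 (n - 1)).lcm a ≠ 0 :=
  (Nat.div_ne_zero_iff_of_dvd (lcm_Icc_pred_dvd a n)).2
    ⟨lcm_Icc_ne_zero ha n, lcm_Icc_ne_zero ha (n - 1)⟩

lemma factorization_lcm_Icc (n p : ℕ) :
    ((Icc 1 n).lcm a).factorization p = runningMax (fun i => (a i).factorization p) n :=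
  Finset.factorization_lcm (fun i hi => (ha i (mem_Icc.1 hi).1).ne') p

lemma factorization_lcm_Icc_div (n p : ℕ) :
    ((Icc 1 n).lcm a / (Icc 1 (n - 1)).lcm a).factorization p =
      jump (fun i => (a i).factorization p) n := by
  rw [Nat.factorization_div (lcm_Icc_pred_dvd a n), Finsupp.tsub_apply,
    factorization_lcm_Icc ha, factorization_lcm_Icc ha, jump]

end Factorization

end StrongDivisibility

open StrongDivisibility in
theorem stmt_17 (a : ℕ → ℕ) (ha : ∀ n, 1 ≤ n → 0 < a n)
    (c : ℕ → ℕ)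
    (hc : ∀ n, 1 ≤ n →
      c n = Finset.lcm (Finset.Icc 1 n) a / Finset.lcm (Finset.Icc 1 (n - 1)) a) :
    (∀ n m, 1 ≤ n → 1 ≤ m → Nat.gcd (a n) (a m) = a (Nat.gcd n m))
      ↔ (∀ n, 1 ≤ n → a n = ∏ d ∈ n.divisors, c d) := by
  have hc0 : ∀ n, 1 ≤ n → c n ≠ 0 := fun n hn => hc n hn ▸ lcm_Icc_div_ne_zero ha n
  have hcv : ∀ p d, 1 ≤ d → (c d).factorization p = jump (fun i => (a i).factorization p) d :=
    fun p d hd => by rw [hc d hd, factorization_lcm_Icc_div ha]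
  rw [gcd_eq_iff_forall_isMinStrongDivSeq_factorization ha,
    eq_prod_divisors_iff_forall_factorization ha hc0]
  refine forall_congr' fun p => ?_
  rw [isMinStrongDivSeq_iff_eq_sum_divisors_jump]
  refine forall₂_congr fun n _ => ?_
  rw [sum_congr rfl fun d hd => hcv p d (Nat.pos_of_mem_divisors hd)]
end

section
/- Let (a_n)_{n≥1} be a strong divisibility sequence of positive integers and for n ≥ k ≥ 0 define the a-binomial coefficient C_a(n,k) = (a_n a_{n-1} ⋯ a_{n-k+1})/(a_1 a_2 ⋯ a_k), which is always a positive integer. Then for every n ≥ 0, lcm(C_a(n,0), C_a(n,1), ..., C_a(n,n)) = lcm(a_1, a_2, ..., a_{n+1}) / a_{n+1}. -/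
/-!
Fix a prime `p` and write `a_t! = a_1 ⋯ a_t`. Strong divisibility makes `p ^ i ∣ a_m` equivalent to
`r_i ∣ m`, where `r_i` is the rank of apparition of `p ^ i`, so `v_p(a_t!) = ∑ᵢ ⌊t / r_i⌋` as in
Legendre's formula. Floor estimates then give `a_k! a_l! ∣ a_{k+l}!` and
`a_{k+l+1}! ∣ a_k! a_l! · lcm(a_1, …, a_{k+l+1})`: for the latter, `⌊(k+l+1)/r_i⌋ ≤ ⌊k/r_i⌋ + ⌊l/r_i⌋ + 1`,
and the left side vanishes unless `0 < r_i ≤ k + l + 1`, when `p ^ i ∣ a_{r_i}` divides the lcm.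
Since `C(n, k) a_k! a_{n-k}! = a_n!`, the second divisibility says `a_{n+1} C(n, k) ∣ lcm`, and the
first, applied to `a_{k+1}! a_{n-k}! ∣ a_{n+1}!`, says `a_{k+1} ∣ a_{n+1} C(n, k)`.
-/

open Finset

theorem Nat.Icc_one_eq_Ioc_zero (n : ℕ) : Icc 1 n = Ioc 0 n :=
  Icc_add_one_left_eq_Ioc 0 n

theorem Nat.add_add_one_div_le (x y r : ℕ) : (x + y + 1) / r ≤ x / r + y / r + 1 := by
  rcases Nat.eq_zero_or_pos r with rfl | hr
  · simp
  rw [← Nat.lt_succ_iff, Nat.div_lt_iff_lt_mul hr]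
  have hx := Nat.lt_div_mul_add (a := x) hr
  have hy := Nat.lt_div_mul_add (a := y) hr
  nlinarith

def IsStrongDivSeq (a : ℕ → ℕ) : Prop :=
  ∀ n m, 1 ≤ n → 1 ≤ m → Nat.gcd (a n) (a m) = a (Nat.gcd n m)

open Classical in
/-- The least `m > 0` with `d ∣ a m`, and `0` if there is none (so that
`dvd_iff_rankOfApparition_dvd` holds in both cases). -/
noncomputable def rankOfApparition (a : ℕ → ℕ) (d : ℕ) : ℕ :=
  if h : ∃ m, 0 < m ∧ d ∣ a m then Nat.find h else 0

def seqFactorial (a : ℕ → ℕ) (n : ℕ) : ℕ := ∏ j ∈ Icc 1 n, a j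

def seqChoose (a : ℕ → ℕ) (n k : ℕ) : ℕ :=
  (∏ j ∈ Icc (n - k + 1) n, a j) / seqFactorial a k

theorem seqFactorial_mul_prod_Icc (a : ℕ → ℕ) {m n : ℕ} (h : m ≤ n) :
    seqFactorial a m * ∏ j ∈ Icc (m + 1) n, a j = seqFactorial a n := by
  rw [seqFactorial, seqFactorial, Icc_add_one_left_eq_Ioc, Nat.Icc_one_eq_Ioc_zero,
    Nat.Icc_one_eq_Ioc_zero]
  exact prod_Ioc_consecutive a m.zero_le h

theorem seqFactorial_succ (a : ℕ → ℕ) (n : ℕ) :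
    seqFactorial a (n + 1) = seqFactorial a n * a (n + 1) :=
  prod_Icc_succ_top (Nat.le_add_left 1 n) a

variable {a : ℕ → ℕ}

theorem seqFactorial_pos (ha : ∀ n, 1 ≤ n → 0 < a n) (n : ℕ) : 0 < seqFactorial a n :=
  prod_pos fun j hj => ha j (mem_Icc.mp hj).1

namespace IsStrongDivSeq

theorem dvd_iff_rankOfApparition_dvd (hsd : IsStrongDivSeq a) (d : ℕ) {m : ℕ} (hm : 0 < m) :
    d ∣ a m ↔ rankOfApparition a d ∣ m := by
  classical
  unfold rankOfApparition
  split_ifs with h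
  · obtain ⟨hr, hdr⟩ := Nat.find_spec h
    constructor
    · intro hdm
      have hgcd : d ∣ a (Nat.gcd m (Nat.find h)) := hsd m _ hm hr ▸ Nat.dvd_gcd hdm hdr
      have hmin := Nat.find_min' h ⟨Nat.gcd_pos_of_pos_left _ hm, hgcd⟩
      rw [← le_antisymm (Nat.gcd_le_right m hr) hmin]
      exact Nat.gcd_dvd_left _ _
    · intro hrm
      have hdvd : a (Nat.find h) ∣ a m := by
        rw [← Nat.gcd_eq_left_iff_dvd, hsd _ m hr hm, Nat.gcd_eq_left hrm]
      exact hdr.trans hdvd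
  · push Not at h
    rw [zero_dvd_iff]
    exact iff_of_false (h m hm) hm.ne'

theorem factorization_seqFactorial (hsd : IsStrongDivSeq a) (ha : ∀ n, 1 ≤ n → 0 < a n)
    {p b t : ℕ} (hp : p.Prime) (hb : ∀ j ∈ Icc 1 t, a j < p ^ b) :
    (seqFactorial a t).factorization p = ∑ i ∈ Ico 1 b, t / rankOfApparition a (p ^ i) := by
  have hpos : ∀ j ∈ Icc 1 t, 0 < a j := fun j hj => ha j (mem_Icc.mp hj).1
  calc (seqFactorial a t).factorization p
      = ∑ j ∈ Icc 1 t, #{i ∈ Ico 1 b | p ^ i ∣ a j} := by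
        rw [seqFactorial, Nat.factorization_prod fun j hj => (hpos j hj).ne', sum_apply']
        exact sum_congr rfl fun j hj =>
          Nat.factorization_eq_card_pow_dvd_of_lt hp (hpos j hj) (hb j hj)
    _ = ∑ i ∈ Ico 1 b, #{j ∈ Icc 1 t | p ^ i ∣ a j} := by
        simp only [card_filter]
        exact sum_comm
    _ = ∑ i ∈ Ico 1 b, t / rankOfApparition a (p ^ i) := by
        refine sum_congr rfl fun i _ => ?_
        rw [← Nat.Ioc_filter_dvd_card_eq_div, ← Nat.Icc_one_eq_Ioc_zero]
        exact congrArg card (filter_congr fun j hj =>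
          hsd.dvd_iff_rankOfApparition_dvd _ (mem_Icc.mp hj).1)

theorem seqFactorial_mul_dvd (hsd : IsStrongDivSeq a) (ha : ∀ n, 1 ≤ n → 0 < a n) (k l : ℕ) :
    seqFactorial a k * seqFactorial a l ∣ seqFactorial a (k + l) := by
  have hF := seqFactorial_pos ha
  rw [← Nat.factorization_prime_le_iff_dvd (Nat.mul_pos (hF k) (hF l)).ne' (hF _).ne']
  intro p hp
  have hb : ∀ t ≤ k + l, ∀ j ∈ Icc 1 t, a j < p ^ seqFactorial a (k + l) := fun t ht j hj =>
    (Nat.le_of_dvd (hF _) (dvd_prod_of_mem a (Icc_subset_Icc_right ht hj))).trans_lt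
      (Nat.lt_pow_self hp.one_lt)
  rw [Nat.factorization_mul (hF k).ne' (hF l).ne', Finsupp.add_apply,
    hsd.factorization_seqFactorial ha hp (hb k (by omega)),
    hsd.factorization_seqFactorial ha hp (hb l (by omega)),
    hsd.factorization_seqFactorial ha hp (hb _ le_rfl), ← sum_add_distrib]
  exact sum_le_sum fun i _ => Nat.div_add_div_le_add_div

theorem seqFactorial_dvd_mul_lcm (hsd : IsStrongDivSeq a) (ha : ∀ n, 1 ≤ n → 0 < a n)
    (k l : ℕ) :
    seqFactorial a (k + l + 1) ∣
      seqFactorial a k * seqFactorial a l * (Icc 1 (k + l + 1)).lcm a := by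
  have hF := seqFactorial_pos ha
  set L := (Icc 1 (k + l + 1)).lcm a
  have hL : 0 < L := Nat.pos_of_ne_zero <| by
    simpa [L, Finset.lcm_eq_zero_iff] using fun j hj _ => (ha j hj).ne'
  rw [← Nat.factorization_prime_le_iff_dvd (hF _).ne'
    (Nat.mul_pos (Nat.mul_pos (hF k) (hF l)) hL).ne']
  intro p hp
  have hb : ∀ t ≤ k + l + 1, ∀ j ∈ Icc 1 t, a j < p ^ L := fun t ht j hj =>
    (Nat.le_of_dvd hL (dvd_lcm (Icc_subset_Icc_right ht hj))).trans_lt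
      (Nat.lt_pow_self hp.one_lt)
  rw [Nat.factorization_mul (Nat.mul_pos (hF k) (hF l)).ne' hL.ne',
    Nat.factorization_mul (hF k).ne' (hF l).ne', Finsupp.add_apply, Finsupp.add_apply,
    hsd.factorization_seqFactorial ha hp (hb k (by omega)),
    hsd.factorization_seqFactorial ha hp (hb l (by omega)),
    hsd.factorization_seqFactorial ha hp (hb _ le_rfl),
    Nat.factorization_eq_card_pow_dvd_of_lt hp hL (Nat.lt_pow_self hp.one_lt), card_filter,
    ← sum_add_distrib, ← sum_add_distrib]
  refine sum_le_sum fun i _ => ?_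
  set r := rankOfApparition a (p ^ i)
  split_ifs with hpL
  · exact Nat.add_add_one_div_le k l r
  · suffices h0 : (k + l + 1) / r = 0 by rw [h0]; exact Nat.zero_le _
    refine Nat.div_eq_zero_iff.mpr (by_contra fun h => hpL ?_)
    push Not at h
    have hr : 0 < r := Nat.pos_of_ne_zero h.1
    exact ((hsd.dvd_iff_rankOfApparition_dvd _ hr).mpr dvd_rfl).trans
      (dvd_lcm (mem_Icc.mpr ⟨hr, h.2⟩))

theorem seqChoose_mul_seqFactorial_mul (hsd : IsStrongDivSeq a) (ha : ∀ n, 1 ≤ n → 0 < a n)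
    {n k : ℕ} (hk : k ≤ n) :
    seqChoose a n k * (seqFactorial a k * seqFactorial a (n - k)) = seqFactorial a n := by
  have hsplit := seqFactorial_mul_prod_Icc a (Nat.sub_le n k)
  have hdvd : seqFactorial a k ∣ ∏ j ∈ Icc (n - k + 1) n, a j := by
    have h := hsd.seqFactorial_mul_dvd ha k (n - k)
    rw [Nat.add_sub_cancel' hk, ← hsplit, mul_comm (seqFactorial a k)] at h
    exact Nat.dvd_of_mul_dvd_mul_left (seqFactorial_pos ha _) h
  rw [seqChoose, ← mul_assoc, Nat.div_mul_cancel hdvd, mul_comm, hsplit]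

theorem succ_mul_seqChoose_mul (hsd : IsStrongDivSeq a) (ha : ∀ n, 1 ≤ n → 0 < a n)
    {n k : ℕ} (hk : k ≤ n) :
    a (n + 1) * seqChoose a n k * (seqFactorial a k * seqFactorial a (n - k)) =
      seqFactorial a (n + 1) := by
  rw [mul_assoc, hsd.seqChoose_mul_seqFactorial_mul ha hk, seqFactorial_succ, mul_comm]

theorem succ_mul_seqChoose_dvd_lcm (hsd : IsStrongDivSeq a) (ha : ∀ n, 1 ≤ n → 0 < a n)
    {n k : ℕ} (hk : k ≤ n) :
    a (n + 1) * seqChoose a n k ∣ (Icc 1 (n + 1)).lcm a := by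
  have h := hsd.seqFactorial_dvd_mul_lcm ha k (n - k)
  rw [Nat.add_sub_cancel' hk, ← hsd.succ_mul_seqChoose_mul ha hk,
    mul_comm _ (Finset.lcm _ _)] at h
  exact Nat.dvd_of_mul_dvd_mul_right
    (Nat.mul_pos (seqFactorial_pos ha k) (seqFactorial_pos ha _)) h

/-- The `a`-analogue of `(n + 1) * n.choose k = (k + 1) * (n + 1).choose (k + 1)`. -/
theorem dvd_succ_mul_seqChoose (hsd : IsStrongDivSeq a) (ha : ∀ n, 1 ≤ n → 0 < a n)
    {n k : ℕ} (hk : k ≤ n) :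
    a (k + 1) ∣ a (n + 1) * seqChoose a n k := by
  have h := hsd.seqFactorial_mul_dvd ha (k + 1) (n - k)
  rw [show k + 1 + (n - k) = n + 1 by omega, ← hsd.succ_mul_seqChoose_mul ha hk,
    seqFactorial_succ, mul_right_comm, mul_comm (a (n + 1) * _)] at h
  exact Nat.dvd_of_mul_dvd_mul_left
    (Nat.mul_pos (seqFactorial_pos ha k) (seqFactorial_pos ha _)) h

end IsStrongDivSeq

theorem stmt_18 (a : ℕ → ℕ) (ha : ∀ n, 1 ≤ n → 0 < a n)
    (hsd : ∀ n m, 1 ≤ n → 1 ≤ m → Nat.gcd (a n) (a m) = a (Nat.gcd n m))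
    (n : ℕ) :
    Finset.lcm (Finset.range (n + 1))
        (fun k => (∏ j ∈ Finset.Icc (n - k + 1) n, a j) / ∏ j ∈ Finset.Icc 1 k, a j)
      = Finset.lcm (Finset.Icc 1 (n + 1)) a / a (n + 1) := by
  change (range (n + 1)).lcm (seqChoose a n) = _
  have hsd : IsStrongDivSeq a := hsd
  apply Nat.dvd_antisymm
  · refine Finset.lcm_dvd fun k hk => Nat.dvd_div_of_mul_dvd ?_
    exact hsd.succ_mul_seqChoose_dvd_lcm ha (Nat.lt_succ_iff.mp (mem_range.mp hk))
  · rw [Nat.div_dvd_iff_dvd_mul (dvd_lcm (right_mem_Icc.mpr n.succ_pos)) (ha _ n.succ_pos)]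
    refine Finset.lcm_dvd fun j hj => ?_
    obtain ⟨k, rfl⟩ : ∃ k, j = k + 1 := ⟨j - 1, by grind⟩
    have hk : k ≤ n := by grind
    exact (hsd.dvd_succ_mul_seqChoose ha hk).trans
      (mul_dvd_mul_left _ (dvd_lcm (mem_range.mpr (Nat.lt_succ_of_le hk))))
end

section
/- Let (F_n) be the Fibonacci sequence with F_1 = F_2 = 1, and Φ = (1+√5)/2 the golden ratio. Then for every integer n ≥ 1, Φ^(n²/4 - 9/4) ≤ lcm(F_1, F_2, ..., F_n) ≤ Φ^(n²/3 + 4n/3). -/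
/-!
Write `L n = lcm (F 1, …, F n)` and measure everything in `logb φ`, where
`k - 2 ≤ logb φ (F k) ≤ k - 1`. Since `L (n + 1) = L n * F (n + 1) / gcd (F (n + 1), L n)`,
both bounds come down to estimating `gcd (F m, L (m - 1))`.

Lower bound: `gcd (F m, F k) = F (gcd m k)`, and every proper divisor of `m` divides
some `m / p` with `p ∣ m` prime, so the gcd divides `∏_{p ∣ m} F (m / p)`. Summed over `m ≤ n`
the losses are `∑_{p ≤ n} C(⌊n / p⌋, 2) ≤ (n² + 9) / 4 - 3n / 2` for `n ≥ 35`: the primes below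
30 are summed explicitly and the others contribute at most `∑_{j ≥ 15} n² / (8 j (j + 1))`.
Smaller `n` are checked numerically with `5 / 3` in place of `φ`.

Upper bound: `F (m / 2)` and `F (m / 3)`, when defined, divide both `F m` and
`L (m - 1)`, and so does their lcm `F (m / 2) F (m / 3) / F (m / 6)` when `6 ∣ m`. Over any six
consecutive `m` this saves enough to make the exponents sum to at most `(n² + 4n) / 3`.
-/

open Finset Real
open scoped goldenRatio

theorem Nat.gcd_lcm_dvd_lcm_gcd (a b c : ℕ) : gcd a (lcm b c) ∣ lcm (gcd a b) (gcd a c) := by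
  rcases eq_or_ne a 0 with rfl | ha
  · simp
  rcases eq_or_ne b 0 with rfl | hb
  · simpa using Nat.dvd_lcm_left _ _
  rcases eq_or_ne c 0 with rfl | hc
  · simpa using Nat.dvd_lcm_right _ _
  have hab := gcd_ne_zero_left (n := b) ha
  have hac := gcd_ne_zero_left (n := c) ha
  rw [← factorization_le_iff_dvd (gcd_ne_zero_left ha) (lcm_ne_zero hab hac),
    factorization_gcd ha (lcm_ne_zero hb hc), factorization_lcm hb hc, factorization_lcm hab hac,
    factorization_gcd ha hb, factorization_gcd ha hc]
  intro p
  simp only [Finsupp.inf_apply, Finsupp.sup_apply]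
  omega

theorem Nat.gcd_finset_lcm_dvd {ι : Type*} (a : ℕ) (s : Finset ι) (f : ι → ℕ) :
    gcd a (s.lcm f) ∣ s.lcm fun i ↦ gcd a (f i) := by
  classical
  induction s using Finset.induction_on with
  | empty => simp
  | insert i s _ ih =>
    rw [lcm_insert, lcm_insert]
    exact (gcd_lcm_dvd_lcm_gcd _ _ _).trans (lcm_dvd_lcm dvd_rfl ih)

theorem Nat.exists_mem_primeFactors_dvd_div {d m : ℕ} (hdm : d ∣ m) (hlt : d < m) :
    ∃ p ∈ m.primeFactors, d ∣ m / p := by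
  have hd : 0 < d := Nat.pos_of_ne_zero fun h ↦ by simp [h] at hdm; omega
  have hq : m / d ≠ 1 := fun h ↦ by
    rw [Nat.div_eq_iff_eq_mul_left hd hdm, one_mul] at h; omega
  refine ⟨(m / d).minFac, mem_primeFactors.2 ⟨minFac_prime hq,
    (minFac_dvd _).trans (div_dvd_of_dvd hdm), by omega⟩, Nat.dvd_div_of_mul_dvd ?_⟩
  rw [mul_comm]
  exact Nat.mul_dvd_of_dvd_div hdm (minFac_dvd _)

theorem Real.logb_natCast_lcm (b : ℝ) {a c : ℕ} (ha : a ≠ 0) (hc : c ≠ 0) :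
    logb b (Nat.lcm a c) = logb b a + logb b c - logb b (Nat.gcd a c) := by
  have h := congrArg (fun k : ℕ ↦ logb b k) (Nat.gcd_mul_lcm a c)
  simp only [Nat.cast_mul] at h
  rw [logb_mul (by simpa using Nat.gcd_ne_zero_left ha) (by simpa using Nat.lcm_ne_zero ha hc),
    logb_mul (by simpa using ha) (by simpa using hc)] at h
  linarith

namespace FibonacciLcm

theorem goldenRatio_pow_le_fib_add_two (n : ℕ) : φ ^ n ≤ Nat.fib (n + 2) := by
  induction n using Nat.twoStepInduction with
  | zero => simp
  | one =>
    norm_num [Nat.fib_add_two]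
    exact goldenRatio_lt_two.le
  | more n ih₁ ih₂ =>
    have := goldenRatio_pow_sub_goldenRatio_pow n
    rw [Nat.fib_add_two, Nat.cast_add]
    linarith

theorem fib_add_one_le_goldenRatio_pow (n : ℕ) : (Nat.fib (n + 1) : ℝ) ≤ φ ^ n := by
  induction n using Nat.twoStepInduction with
  | zero => simp
  | one => simpa using one_lt_goldenRatio.le
  | more n ih₁ ih₂ =>
    have := goldenRatio_pow_sub_goldenRatio_pow n
    rw [Nat.fib_add_two, Nat.cast_add]
    linarith

theorem sub_two_le_logb_fib {k : ℕ} (hk : 0 < k) : (k : ℝ) - 2 ≤ logb φ (Nat.fib k) := by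
  obtain _ | _ | n := k
  · omega
  · norm_num
  · rw [le_logb_iff_rpow_le one_lt_goldenRatio (by simp [Nat.fib_pos])]
    push_cast
    rw [show (n : ℝ) + 1 + 1 - 2 = n by ring, rpow_natCast]
    exact goldenRatio_pow_le_fib_add_two n

theorem logb_fib_le_sub_one {k : ℕ} (hk : 0 < k) : logb φ (Nat.fib k) ≤ k - 1 := by
  obtain ⟨n, rfl⟩ := Nat.exists_eq_add_of_lt hk
  rw [logb_le_iff_le_rpow one_lt_goldenRatio (by simp [Nat.fib_pos]), zero_add, Nat.cast_add,
    Nat.cast_one, add_sub_cancel_right, rpow_natCast]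
  exact fib_add_one_le_goldenRatio_pow n

theorem goldenRatio_le_five_div_three : φ ≤ 5 / 3 := by
  have : √5 ≤ 7 / 3 := (sqrt_le_left (by norm_num)).2 (by norm_num)
  rw [goldenRatio]
  linarith

def fibLcm (n : ℕ) : ℕ := (Icc 1 n).lcm Nat.fib

theorem fibLcm_zero : fibLcm 0 = 1 := rfl

theorem fibLcm_succ (n : ℕ) : fibLcm (n + 1) = Nat.lcm (Nat.fib (n + 1)) (fibLcm n) := by
  rw [fibLcm, fibLcm, ← insert_Icc_right_eq_Icc_add_one (by omega), lcm_insert, lcm_eq_nat_lcm]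

theorem fibLcm_pos (n : ℕ) : 0 < fibLcm n :=
  Nat.pos_of_ne_zero <| lcm_ne_zero_iff.2 fun _ hk ↦ (Nat.fib_pos.2 (mem_Icc.1 hk).1).ne'

theorem fib_dvd_fibLcm {k n : ℕ} (hk : 0 < k) (hkn : k ≤ n) : Nat.fib k ∣ fibLcm n :=
  dvd_lcm (mem_Icc.2 ⟨hk, hkn⟩)

theorem logb_fibLcm_succ (n : ℕ) : logb φ (fibLcm (n + 1)) = logb φ (fibLcm n) +
    logb φ (Nat.fib (n + 1)) - logb φ (Nat.gcd (Nat.fib (n + 1)) (fibLcm n)) := by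
  rw [fibLcm_succ, logb_natCast_lcm _ (Nat.fib_pos.2 n.succ_pos).ne' (fibLcm_pos n).ne']
  ring

theorem gcd_fib_fibLcm_dvd_prod (m : ℕ) :
    Nat.gcd (Nat.fib m) (fibLcm (m - 1)) ∣ ∏ p ∈ m.primeFactors, Nat.fib (m / p) := by
  refine (Nat.gcd_finset_lcm_dvd _ _ _).trans (Finset.lcm_dvd fun k hk ↦ ?_)
  rw [mem_Icc] at hk
  rw [← Nat.fib_gcd]
  obtain ⟨p, hp, hdvd⟩ := Nat.exists_mem_primeFactors_dvd_div (Nat.gcd_dvd_left m k)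
    ((Nat.gcd_le_right _ (by omega)).trans_lt (by omega))
  exact (Nat.fib_dvd _ _ hdvd).trans (dvd_prod_of_mem _ hp)

theorem logb_fibLcm_add_sub_le_logb_fibLcm_succ (n : ℕ) :
    logb φ (fibLcm n) + n - 1 - ∑ p ∈ (n + 1).primeFactors, ((n / p : ℕ) : ℝ) ≤
      logb φ (fibLcm (n + 1)) := by
  have hfib := sub_two_le_logb_fib n.succ_pos
  have hpos : ∀ p ∈ (n + 1).primeFactors, 0 < (n + 1) / p := fun p hp ↦
    Nat.div_pos (Nat.le_of_mem_primeFactors hp) (Nat.prime_of_mem_primeFactors hp).pos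
  have hprod : 0 < ∏ p ∈ (n + 1).primeFactors, Nat.fib ((n + 1) / p) :=
    prod_pos fun p hp ↦ Nat.fib_pos.2 (hpos p hp)
  have hgcd : Nat.gcd (Nat.fib (n + 1)) (fibLcm n) ≤
      ∏ p ∈ (n + 1).primeFactors, Nat.fib ((n + 1) / p) :=
    Nat.le_of_dvd hprod (gcd_fib_fibLcm_dvd_prod (n + 1))
  have hlogb : logb φ (Nat.gcd (Nat.fib (n + 1)) (fibLcm n)) ≤
      ∑ p ∈ (n + 1).primeFactors, ((n / p : ℕ) : ℝ) := calc
    _ ≤ logb φ (∏ p ∈ (n + 1).primeFactors, Nat.fib ((n + 1) / p) : ℕ) :=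
      logb_le_logb_of_le one_lt_goldenRatio
        (by exact_mod_cast Nat.gcd_pos_of_pos_right _ (fibLcm_pos n)) (by exact_mod_cast hgcd)
    _ = ∑ p ∈ (n + 1).primeFactors, logb φ (Nat.fib ((n + 1) / p)) := by
      rw [Nat.cast_prod, logb_prod]
      exact fun p hp ↦ by exact_mod_cast (Nat.fib_pos.2 (hpos p hp)).ne'
    _ ≤ ∑ p ∈ (n + 1).primeFactors, ((n / p : ℕ) : ℝ) := sum_le_sum fun p hp ↦ by
      have h := logb_fib_le_sub_one (hpos p hp)
      rw [Nat.succ_div_of_dvd (Nat.dvd_of_mem_primeFactors hp)] at h ⊢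
      simpa using h
  rw [logb_fibLcm_succ]
  push_cast at hfib
  linarith

def primeDivChooseSum (n : ℕ) : ℕ := ∑ p ∈ (n + 1).primesBelow, (n / p).choose 2

theorem choose_two_succ_div (n p : ℕ) :
    ((n + 1) / p).choose 2 = (n / p).choose 2 + if p ∣ n + 1 then n / p else 0 := by
  rw [Nat.succ_div]
  split_ifs <;> simp [Nat.choose_succ_succ', add_comm]

theorem primeDivChooseSum_succ (n : ℕ) :
    primeDivChooseSum (n + 1) = primeDivChooseSum n + ∑ p ∈ (n + 1).primeFactors, n / p := by
  simp only [primeDivChooseSum, choose_two_succ_div, sum_add_distrib, ← sum_filter]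
  congr 1
  · refine (sum_subset (Nat.primesBelow_mono (by omega)) fun p hp hp' ↦ ?_).symm
    rw [Nat.mem_primesBelow] at hp hp'
    obtain rfl : p = n + 1 := by by_contra h; exact hp' ⟨by omega, hp.2⟩
    rw [Nat.div_eq_of_lt n.lt_succ_self]
    rfl
  · congr 1
    ext p
    simp only [mem_filter, Nat.mem_primesBelow, Nat.mem_primeFactors]
    constructor
    · rintro ⟨⟨-, hp⟩, hd⟩
      exact ⟨hp, hd, by omega⟩
    · rintro ⟨hp, hd, -⟩
      exact ⟨⟨Nat.lt_succ_of_le (Nat.le_of_dvd n.succ_pos hd), hp⟩, hd⟩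

theorem sub_primeDivChooseSum_le_logb_fibLcm (n : ℕ) :
    ((n : ℝ) ^ 2 - 3 * n) / 2 - primeDivChooseSum n ≤ logb φ (fibLcm n) := by
  induction n with
  | zero => simp [fibLcm_zero, primeDivChooseSum]
  | succ n ih =>
    have := logb_fibLcm_add_sub_le_logb_fibLcm_succ n
    rw [primeDivChooseSum_succ]
    push_cast
    linarith

theorem cast_choose_two_le {J : ℕ} {x : ℝ} (hJx : (J : ℝ) ≤ x) (hx : 1 ≤ x) :
    (J.choose 2 : ℝ) ≤ x * (x - 1) / 2 := by
  rw [Nat.cast_choose_two]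
  have := J.cast_nonneg (α := ℝ)
  nlinarith

theorem cast_choose_two_div_le (n : ℕ) {p : ℕ} (hp : 2 ≤ p) :
    ((n / p).choose 2 : ℝ) ≤ n ^ 2 / (2 * ((p : ℝ) ^ 2 - 1)) := by
  have hJ : ((n / p : ℕ) : ℝ) ≤ n / p := Nat.cast_div_le
  have hp' : (2 : ℝ) ≤ p := by exact_mod_cast hp
  rw [Nat.cast_choose_two]
  calc _ ≤ ((n / p : ℕ) : ℝ) ^ 2 / 2 := by nlinarith [(n / p).cast_nonneg (α := ℝ)]
    _ ≤ ((n : ℝ) / p) ^ 2 / 2 := by gcongr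
    _ = n ^ 2 / (2 * p ^ 2) := by ring
    _ ≤ _ := by gcongr <;> nlinarith

theorem sum_Ico_one_div_mul_add_one {a b : ℕ} (ha : 0 < a) (hab : a ≤ b) :
    ∑ j ∈ Ico a b, 1 / ((j : ℝ) * (j + 1)) = 1 / a - 1 / b := by
  rw [show (1 : ℝ) / a - 1 / b = -(1 / (b : ℝ)) - -(1 / (a : ℝ)) by ring,
    ← sum_Ico_sub (fun j : ℕ ↦ -(1 / (j : ℝ))) hab]
  refine sum_congr rfl fun j hj ↦ ?_
  have : (0 : ℝ) < j := by exact_mod_cast ha.trans_le (mem_Ico.1 hj).1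
  push_cast
  field_simp
  ring

/-- Writing `p = 2j + 1`, `1 / (p ^ 2 - 1) = (1 / j - 1 / (j + 1)) / 4` telescopes. -/
theorem sum_one_div_sq_sub_one_le {s : Finset ℕ} {a : ℕ} (ha : 0 < a)
    (hs : ∀ p ∈ s, Odd p ∧ 2 * a ≤ p) : ∑ p ∈ s, 1 / ((p : ℝ) ^ 2 - 1) ≤ 1 / (4 * (a : ℝ)) := by
  set N := s.sup id
  have hsub : s ⊆ (Ico a N).image fun j ↦ 2 * j + 1 := fun p hp ↦ by
    obtain ⟨⟨j, rfl⟩, hj⟩ := hs p hp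
    have : 2 * j + 1 ≤ N := le_sup (f := id) hp
    exact mem_image.2 ⟨j, mem_Ico.2 ⟨by omega, by omega⟩, rfl⟩
  calc ∑ p ∈ s, 1 / ((p : ℝ) ^ 2 - 1)
      ≤ ∑ p ∈ (Ico a N).image (fun j : ℕ ↦ 2 * j + 1), 1 / ((p : ℝ) ^ 2 - 1) := by
        refine sum_le_sum_of_subset_of_nonneg hsub fun p hp _ ↦ ?_
        obtain ⟨j, -, rfl⟩ := mem_image.1 hp
        push_cast
        exact div_nonneg zero_le_one (by nlinarith [j.cast_nonneg (α := ℝ)])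
    _ = 1 / 4 * ∑ j ∈ Ico a N, 1 / ((j : ℝ) * (j + 1)) := by
        rw [sum_image fun _ _ _ _ h ↦ by omega, mul_sum]
        refine sum_congr rfl fun j hj ↦ ?_
        push_cast
        rw [show (2 * (j : ℝ) + 1) ^ 2 - 1 = 4 * (j * (j + 1)) by ring, one_div_mul_one_div]
    _ ≤ 1 / (4 * (a : ℝ)) := by
        rcases le_total a N with h | h
        · rw [sum_Ico_one_div_mul_add_one ha h, mul_sub, one_div_mul_one_div]
          have : (0 : ℝ) ≤ 1 / 4 * (1 / N) := by positivity
          linarith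
        · rw [Ico_eq_empty_of_le h, sum_empty, mul_zero]
          positivity

theorem sum_cast_choose_two_div_le (n : ℕ) {s : Finset ℕ} {a : ℕ} (ha : 0 < a)
    (hs : ∀ p ∈ s, Odd p ∧ 2 * a ≤ p) :
    ∑ p ∈ s, ((n / p).choose 2 : ℝ) ≤ n ^ 2 / (8 * a) := calc
  _ ≤ ∑ p ∈ s, (n : ℝ) ^ 2 / (2 * ((p : ℝ) ^ 2 - 1)) := sum_le_sum fun p hp ↦
      cast_choose_two_div_le n (by have := hs p hp; omega)
  _ = n ^ 2 / 2 * ∑ p ∈ s, 1 / ((p : ℝ) ^ 2 - 1) := by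
      rw [mul_sum]
      exact sum_congr rfl fun p _ ↦ by rw [div_mul_div_comm, mul_one]
  _ ≤ n ^ 2 / 2 * (1 / (4 * a)) := by
      gcongr
      exact sum_one_div_sq_sub_one_le ha hs
  _ = n ^ 2 / (8 * a) := by ring

theorem four_mul_primeDivChooseSum_add_le {n : ℕ} (hn : 35 ≤ n) :
    4 * (primeDivChooseSum n : ℝ) + 6 * n ≤ n ^ 2 + 9 := by
  have hsplit : (primeDivChooseSum n : ℝ) = ∑ p ∈ Nat.primesBelow 30, ((n / p).choose 2 : ℝ) +
      ∑ p ∈ (n + 1).primesBelow with 30 ≤ p, ((n / p).choose 2 : ℝ) := by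
    rw [primeDivChooseSum, Nat.cast_sum, ← sum_filter_not_add_sum_filter _ (30 ≤ ·)]
    congr 2
    ext p
    simp only [mem_filter, Nat.mem_primesBelow]
    constructor
    · rintro ⟨⟨-, hp⟩, h⟩
      exact ⟨by omega, hp⟩
    · rintro ⟨h, hp⟩
      exact ⟨⟨by omega, hp⟩, by omega⟩
  have hsmall : ∑ p ∈ Nat.primesBelow 30, ((n / p).choose 2 : ℝ) ≤
      ∑ p ∈ Nat.primesBelow 30, (n : ℝ) / p * (n / p - 1) / 2 := sum_le_sum fun p hp ↦ by
    have hp := Nat.mem_primesBelow.1 hp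
    have hp0 : (0 : ℝ) < p := by exact_mod_cast hp.2.pos
    have hpn : (p : ℝ) ≤ n := by exact_mod_cast (by omega : p ≤ n)
    exact cast_choose_two_le Nat.cast_div_le ((one_le_div₀ hp0).2 hpn)
  have hlarge : ∑ p ∈ (n + 1).primesBelow with 30 ≤ p, ((n / p).choose 2 : ℝ) ≤
      n ^ 2 / (8 * (15 : ℕ)) := by
    refine sum_cast_choose_two_div_le n (by norm_num) fun p hp ↦ ?_
    obtain ⟨hp, h30⟩ := mem_filter.1 hp
    exact ⟨(Nat.mem_primesBelow.1 hp).2.odd_of_ne_two (by omega), by omega⟩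
  have h := add_le_add hsmall hlarge
  rw [← hsplit, show Nat.primesBelow 30 = {2, 3, 5, 7, 11, 13, 17, 19, 23, 29} by decide] at h
  norm_num [sum_insert] at h
  have : (35 : ℝ) ≤ n := by exact_mod_cast hn
  nlinarith

theorem div_four_le_logb_fibLcm_of_pow_le {n K : ℕ} (h : 5 ^ K ≤ 3 ^ K * fibLcm n ^ 4) :
    (K : ℝ) / 4 ≤ logb φ (fibLcm n) := by
  have hL : (0 : ℝ) < fibLcm n := by exact_mod_cast fibLcm_pos n
  have h' : (5 / 3 : ℝ) ^ K ≤ (fibLcm n : ℝ) ^ 4 := by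
    rw [div_pow, div_le_iff₀ (by positivity), mul_comm]
    exact_mod_cast h
  have hφ : φ ^ (K : ℝ) ≤ (fibLcm n : ℝ) ^ 4 := by
    rw [rpow_natCast]
    exact (pow_le_pow_left₀ goldenRatio_pos.le goldenRatio_le_five_div_three K).trans h'
  rw [← le_logb_iff_rpow_le one_lt_goldenRatio (by positivity), logb_pow] at hφ
  push_cast at hφ
  linarith

theorem five_pow_le_three_pow_mul_fibLcm_pow :
    ∀ n < 35, 5 ^ (n ^ 2 - 9) ≤ 3 ^ (n ^ 2 - 9) * fibLcm n ^ 4 := by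
  decide

theorem sq_sub_nine_div_four_le_logb_fibLcm (n : ℕ) :
    ((n : ℝ) ^ 2 - 9) / 4 ≤ logb φ (fibLcm n) := by
  rcases lt_or_ge n 35 with hn | hn
  · have h := div_four_le_logb_fibLcm_of_pow_le (five_pow_le_three_pow_mul_fibLcm_pow n hn)
    have : ((n ^ 2 : ℕ) : ℝ) ≤ ((n ^ 2 - 9 : ℕ) : ℝ) + 9 := by exact_mod_cast (by omega)
    push_cast at this
    linarith
  · linarith [sub_primeDivChooseSum_le_logb_fibLcm n, four_mul_primeDivChooseSum_add_le hn]

-- Bounds `logb φ (F m / x)` for the common divisor `x` of `F m` and `L (m - 1)` that is used: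
-- `lcm (F (m / 2), F (m / 3))`, `F (m / 2)`, `F (m / 3)` or `1`.
def stepExponent (m : ℕ) : ℕ :=
  if m % 6 = 0 then m / 3 + 2
  else if m % 2 = 0 then m / 2 + 1
  else if m % 3 = 0 then 2 * m / 3 + 1
  else m - 1

theorem logb_fibLcm_succ_le_of_dvd {n x : ℕ} (hxF : x ∣ Nat.fib (n + 1)) (hxL : x ∣ fibLcm n) :
    logb φ (fibLcm (n + 1)) ≤ logb φ (fibLcm n) + logb φ (Nat.fib (n + 1)) - logb φ x := by
  have hx : 0 < x := Nat.pos_of_dvd_of_pos hxF (Nat.fib_pos.2 n.succ_pos)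
  have hle : x ≤ Nat.gcd (Nat.fib (n + 1)) (fibLcm n) :=
    Nat.le_of_dvd (Nat.gcd_pos_of_pos_right _ (fibLcm_pos n)) (Nat.dvd_gcd hxF hxL)
  have := logb_le_logb_of_le one_lt_goldenRatio (Nat.cast_pos.2 hx : (0 : ℝ) < x)
    (Nat.cast_le.2 hle)
  rw [logb_fibLcm_succ]
  linarith

theorem logb_fibLcm_succ_le_of_proper_dvd {n d : ℕ} (hd : d ∣ n + 1) (hd0 : 0 < d) (hdn : d ≤ n) :
    logb φ (fibLcm (n + 1)) ≤ logb φ (fibLcm n) + n + 2 - d := by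
  have := logb_fibLcm_succ_le_of_dvd (Nat.fib_dvd _ _ hd) (fib_dvd_fibLcm hd0 hdn)
  have hF := logb_fib_le_sub_one n.succ_pos
  have hFd := sub_two_le_logb_fib hd0
  push_cast at hF
  linarith

theorem logb_fibLcm_succ_le_of_six_dvd {n t : ℕ} (ht : n + 1 = 6 * t) :
    logb φ (fibLcm (n + 1)) ≤ logb φ (fibLcm n) + 2 * t + 2 := by
  have hx := logb_natCast_lcm φ (Nat.fib_pos.2 (by omega : 0 < 3 * t)).ne'
    (Nat.fib_pos.2 (by omega : 0 < 2 * t)).ne'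
  rw [← Nat.fib_gcd, show Nat.gcd (3 * t) (2 * t) = t by rw [Nat.gcd_mul_right]; simp] at hx
  have := logb_fibLcm_succ_le_of_dvd (n := n) (x := Nat.lcm (Nat.fib (3 * t)) (Nat.fib (2 * t)))
    (Nat.lcm_dvd (Nat.fib_dvd _ _ ⟨2, by omega⟩) (Nat.fib_dvd _ _ ⟨3, by omega⟩))
    (Nat.lcm_dvd (fib_dvd_fibLcm (by omega) (by omega)) (fib_dvd_fibLcm (by omega) (by omega)))
  have hF := logb_fib_le_sub_one n.succ_pos
  have h3t := sub_two_le_logb_fib (by omega : 0 < 3 * t)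
  have h2t := sub_two_le_logb_fib (by omega : 0 < 2 * t)
  have ht1 := logb_fib_le_sub_one (by omega : 0 < t)
  have ht' : (n : ℝ) + 1 = 6 * t := by exact_mod_cast ht
  push_cast at *
  linarith

theorem logb_fibLcm_succ_le (n : ℕ) :
    logb φ (fibLcm (n + 1)) ≤ logb φ (fibLcm n) + stepExponent (n + 1) := by
  unfold stepExponent
  split_ifs with h6 h2 h3
  · have := logb_fibLcm_succ_le_of_six_dvd (n := n) (t := (n + 1) / 6) (by omega)
    rw [show (n + 1) / 3 = 2 * ((n + 1) / 6) by omega]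
    push_cast
    linarith
  · obtain ⟨t, ht⟩ : ∃ t, n + 1 = 2 * t := ⟨(n + 1) / 2, by omega⟩
    have := logb_fibLcm_succ_le_of_proper_dvd (n := n) (d := t) ⟨2, by omega⟩ (by omega) (by omega)
    have ht' : (n : ℝ) + 1 = 2 * t := by exact_mod_cast ht
    rw [show (n + 1) / 2 = t by omega]
    push_cast
    linarith
  · obtain ⟨t, ht⟩ : ∃ t, n + 1 = 3 * t := ⟨(n + 1) / 3, by omega⟩
    have := logb_fibLcm_succ_le_of_proper_dvd (n := n) (d := t) ⟨3, by omega⟩ (by omega) (by omega)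
    have ht' : (n : ℝ) + 1 = 3 * t := by exact_mod_cast ht
    rw [show 2 * (n + 1) / 3 = 2 * t by omega]
    push_cast
    linarith
  · have := logb_fibLcm_succ_le_of_dvd (one_dvd (Nat.fib (n + 1))) (one_dvd (fibLcm n))
    have hF := logb_fib_le_sub_one n.succ_pos
    push_cast at hF
    simp only [Nat.cast_one, logb_one, sub_zero, add_tsub_cancel_right] at this ⊢
    linarith

def stepExponentSum (n : ℕ) : ℕ := ∑ m ∈ range n, stepExponent (m + 1)

theorem logb_fibLcm_le (n : ℕ) : logb φ (fibLcm n) ≤ stepExponentSum n := by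
  induction n with
  | zero => simp [fibLcm_zero, stepExponentSum]
  | succ n ih =>
    rw [stepExponentSum, sum_range_succ, ← stepExponentSum]
    push_cast
    linarith [logb_fibLcm_succ_le n]

theorem three_mul_sum_stepExponent_le (m : ℕ) :
    3 * ∑ i ∈ range 6, stepExponent (m + i + 1) ≤ 12 * m + 60 := by
  obtain ⟨k, r, hr, rfl⟩ : ∃ k r, r < 6 ∧ m = 6 * k + r := ⟨m / 6, m % 6, by omega, by omega⟩
  simp only [sum_range_succ, sum_range_zero]
  interval_cases r <;> simp (disch := omega) only [stepExponent, if_pos, if_neg] <;> omega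

theorem three_mul_stepExponentSum_le (n : ℕ) : 3 * stepExponentSum n ≤ n ^ 2 + 4 * n := by
  induction n using Nat.strong_induction_on with
  | _ n ih =>
    rcases lt_or_ge n 6 with hn | hn
    · interval_cases n <;> decide
    · obtain ⟨m, rfl⟩ := Nat.exists_eq_add_of_le' hn
      rw [stepExponentSum, sum_range_add, ← stepExponentSum]
      have := ih m (by omega)
      have := three_mul_sum_stepExponent_le m
      nlinarith

end FibonacciLcm

theorem stmt_19_general (n : ℕ) :
    ((1 + Real.sqrt 5) / 2) ^ ((n : ℝ) ^ 2 / 4 - 9 / 4)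
        ≤ ((Finset.lcm (Finset.Icc 1 n) Nat.fib : ℕ) : ℝ) ∧
    ((Finset.lcm (Finset.Icc 1 n) Nat.fib : ℕ) : ℝ)
        ≤ ((1 + Real.sqrt 5) / 2) ^ ((n : ℝ) ^ 2 / 3 + 4 * (n : ℝ) / 3) := by
  have hL : (0 : ℝ) < FibonacciLcm.fibLcm n := by exact_mod_cast FibonacciLcm.fibLcm_pos n
  have hlower := FibonacciLcm.sq_sub_nine_div_four_le_logb_fibLcm n
  have hupper : logb φ (FibonacciLcm.fibLcm n) ≤ ((n : ℝ) ^ 2 + 4 * n) / 3 := by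
    have : (3 * FibonacciLcm.stepExponentSum n : ℝ) ≤ n ^ 2 + 4 * n := by
      exact_mod_cast FibonacciLcm.three_mul_stepExponentSum_le n
    linarith [FibonacciLcm.logb_fibLcm_le n]
  exact ⟨(le_logb_iff_rpow_le one_lt_goldenRatio hL).1 (by linarith),
    (logb_le_iff_le_rpow one_lt_goldenRatio hL).1 (by linarith)⟩

theorem stmt_19 (n : ℕ) (hn : 1 ≤ n) :
    ((1 + Real.sqrt 5) / 2) ^ ((n : ℝ) ^ 2 / 4 - 9 / 4)
        ≤ ((Finset.lcm (Finset.Icc 1 n) Nat.fib : ℕ) : ℝ) ∧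
    ((Finset.lcm (Finset.Icc 1 n) Nat.fib : ℕ) : ℝ)
        ≤ ((1 + Real.sqrt 5) / 2) ^ ((n : ℝ) ^ 2 / 3 + 4 * (n : ℝ) / 3) :=
  stmt_19_general n
end
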